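/- arXiv:1810.01522 — 11 statements merged into one kernel-verified Lean document; each statement's English description precedes it below -/
import Mathlib

section
/- For every n ≥ 6, the cycle C_n has distinguishing number 2. -/
open SimpleGraph

/-- A colouring `c` of the vertices of `G` is distinguishing if the only
colour-preserving automorphism of `G` is the identity. -/
def IsDistinguishing {V : Type*} (G : SimpleGraph V) {k : ℕ} (c : V → Fin k) : Prop :=
  ∀ γ : G ≃g G, (∀ v, c (γ v) = c v) → ∀ v, γ v = v

/-- The distinguishing number of a finite graph `G`. -/
noncomputable def distinguishingNumber {V : Type*} [Fintype V] (G : SimpleGraph V) : ℕ :=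
  sInf {k | ∃ c : V → Fin k, IsDistinguishing G c}

/-- Explicit description of adjacency in the cycle graph, in terms of values. -/
lemma cycleGraph_adj_val {n : ℕ} (hn : 2 ≤ n) (u v : Fin n) :
    (cycleGraph n).Adj u v ↔
      u.val + 1 = v.val ∨ v.val + 1 = u.val ∨
        (u.val = 0 ∧ v.val + 1 = n) ∨ (v.val = 0 ∧ u.val + 1 = n) := by
  have H : ∀ a b : ℕ, a < n → b < n →
      (((n : ℕ) - b + a) % n = 1 ↔ (b + 1 = a ∨ (a = 0 ∧ b + 1 = n))) := by
    intro a b ha hb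
    rcases le_or_gt b a with h | h
    · have he : n - b + a = (a - b) + n := by omega
      rw [he, Nat.add_mod_right, Nat.mod_eq_of_lt (by omega)]
      omega
    · rw [Nat.mod_eq_of_lt (by omega)]
      omega
  rw [cycleGraph_adj', Fin.sub_def, Fin.sub_def]
  simp only [Fin.val_mk]
  rw [H u.val v.val u.isLt v.isLt, H v.val u.val v.isLt u.isLt]
  omega

theorem distinguishingNumber_cycleGraph (n : ℕ) (hn : 6 ≤ n) :
    distinguishingNumber (cycleGraph n) = 2 := by
  have hn2 : 2 ≤ n := by omega
  -- the distinguishing 2-colouring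
  set c : Fin n → Fin 2 := fun v => if v.val = 0 ∨ v.val = 1 ∨ v.val = 3 then 1 else 0 with hc
  have hdist : IsDistinguishing (cycleGraph n) c := by
    intro γ hγ
    have hinj : Function.Injective γ := γ.toEquiv.injective
    -- membership in the colour class {0,1,3} is preserved
    have hmem : ∀ v : Fin n, (v.val = 0 ∨ v.val = 1 ∨ v.val = 3) →
        ((γ v).val = 0 ∨ (γ v).val = 1 ∨ (γ v).val = 3) := by
      intro v hv
      have h1 := hγ v
      by_contra h
      simp only [hc, if_pos hv, if_neg h] at h1
      exact absurd h1 (by decide)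
    set v0 : Fin n := ⟨0, by omega⟩ with hv0
    set v1 : Fin n := ⟨1, by omega⟩ with hv1
    set v2 : Fin n := ⟨2, by omega⟩ with hv2
    set v3 : Fin n := ⟨3, by omega⟩ with hv3
    have adj01 : (cycleGraph n).Adj v0 v1 := by
      rw [cycleGraph_adj_val hn2]; left; rfl
    have adjγ01 : (cycleGraph n).Adj (γ v0) (γ v1) := γ.map_rel_iff.mpr adj01
    have m0 := hmem v0 (Or.inl rfl)
    have m1 := hmem v1 (Or.inr (Or.inl rfl))
    have m3 := hmem v3 (Or.inr (Or.inr rfl))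
    -- first show γ fixes v0 and v1
    have h0 : γ v0 = v0 ∧ γ v1 = v1 := by
      rw [cycleGraph_adj_val hn2] at adjγ01
      have hne01 : (γ v0).val ≠ (γ v1).val := by
        intro h; exact absurd (hinj (Fin.ext h)) (by simp [hv0, hv1, Fin.ext_iff])
      -- from adjacency within {0,1,3}, the pair {γ v0, γ v1} must be {0,1}
      have hkey : ((γ v0).val = 0 ∧ (γ v1).val = 1) ∨ ((γ v0).val = 1 ∧ (γ v1).val = 0) := by
        omega
      rcases hkey with ⟨ha, hb⟩ | ⟨ha, hb⟩
      · exact ⟨Fin.ext ha, Fin.ext hb⟩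
      · -- swap case: derive a contradiction using v2 and v3
        exfalso
        have hγ3 : (γ v3).val = 3 := by
          have hne03 : (γ v0).val ≠ (γ v3).val := by
            intro h; exact absurd (hinj (Fin.ext h)) (by simp [hv0, hv3, Fin.ext_iff])
          have hne13 : (γ v1).val ≠ (γ v3).val := by
            intro h; exact absurd (hinj (Fin.ext h)) (by simp [hv1, hv3, Fin.ext_iff])
          omega
        have adj12 : (cycleGraph n).Adj v1 v2 := by
          rw [cycleGraph_adj_val hn2]; left; rfl
        have adj23 : (cycleGraph n).Adj v2 v3 := by
          rw [cycleGraph_adj_val hn2]; left; rfl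
        have adjγ12 : (cycleGraph n).Adj (γ v1) (γ v2) := γ.map_rel_iff.mpr adj12
        have adjγ23 : (cycleGraph n).Adj (γ v2) (γ v3) := γ.map_rel_iff.mpr adj23
        rw [cycleGraph_adj_val hn2] at adjγ12 adjγ23
        have hne02 : (γ v0).val ≠ (γ v2).val := by
          intro h; exact absurd (hinj (Fin.ext h)) (by simp [hv0, hv2, Fin.ext_iff])
        have hlt2 : (γ v2).val < n := (γ v2).isLt
        omega
    -- now an induction shows γ fixes everything
    have key : ∀ k, ∀ hk : k < n, γ ⟨k, hk⟩ = ⟨k, hk⟩ := by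
      intro k
      induction k using Nat.strong_induction_on with
      | _ k ih =>
        intro hk
        match k, hk with
        | 0, hk => exact h0.1
        | 1, hk => exact h0.2
        | (k+2), hk =>
          have ha : γ ⟨k, by omega⟩ = ⟨k, by omega⟩ := ih k (by omega) (by omega)
          have hb : γ ⟨k+1, by omega⟩ = ⟨k+1, by omega⟩ := ih (k+1) (by omega) (by omega)
          have adj : (cycleGraph n).Adj ⟨k+1, by omega⟩ ⟨k+2, hk⟩ := by
            rw [cycleGraph_adj_val hn2]; left; rfl
          have adjγ : (cycleGraph n).Adj ⟨k+1, by omega⟩ (γ ⟨k+2, hk⟩) := by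
            have := γ.map_rel_iff.mpr adj
            rwa [hb] at this
          rw [cycleGraph_adj_val hn2] at adjγ
          have hne : (γ ⟨k, by omega⟩).val ≠ (γ ⟨k+2, hk⟩).val := by
            intro h; exact absurd (hinj (Fin.ext h)) (by simp [Fin.ext_iff])
          rw [ha] at hne
          have hlt : (γ ⟨k+2, hk⟩).val < n := (γ ⟨k+2, hk⟩).isLt
          exact Fin.ext (by simp only [Fin.val_mk] at adjγ hne ⊢; omega)
    intro v
    have := key v.val v.isLt
    simpa using this
  -- now compute the infimum
  have h2mem : 2 ∈ {k | ∃ c : Fin n → Fin k, IsDistinguishing (cycleGraph n) c} := ⟨c, hdist⟩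
  refine le_antisymm (Nat.sInf_le h2mem) (le_csInf ⟨2, h2mem⟩ ?_)
  rintro k ⟨d, hd⟩
  by_contra hlt
  push_neg at hlt
  interval_cases k
  · exact (d ⟨0, by omega⟩).elim0
  · -- with one colour, the rotation is colour-preserving but not the identity
    obtain ⟨m, rfl⟩ : ∃ m, n = m + 2 := ⟨n - 2, by omega⟩
    have rot_adj : ∀ u v : Fin (m + 2),
        (cycleGraph (m + 2)).Adj (u + 1) (v + 1) ↔ (cycleGraph (m + 2)).Adj u v := by
      intro u v
      rw [cycleGraph_adj, cycleGraph_adj, add_sub_add_right_eq_sub, add_sub_add_right_eq_sub]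
    let rot : cycleGraph (m + 2) ≃g cycleGraph (m + 2) :=
      ⟨Equiv.addRight 1, by intro u v; exact rot_adj u v⟩
    have := hd rot (fun v => Subsingleton.elim _ _) 0
    have hval : ((0 : Fin (m + 2)) + 1).val = 1 := by
      simp [Fin.val_add, Nat.mod_eq_of_lt (show 1 < m + 2 by omega)]
    rw [show rot 0 = (0 : Fin (m+2)) + 1 from rfl] at this
    rw [this] at hval
    simp at hval
end

section
/- For every n ≥ 3, the wreath graph W_n = C_n[2K_1] (the lexicographic product of the n-cycle with the edgeless graph on 2 vertices) has distinguishing number strictly greater than 2. -/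
open SimpleGraph

/-- The wreath graph \`W_n = C_n[2K_1]\`: vertices are pairs \`(i, a)\` with
\`i : ZMod n\`, \`a : Fin 2\`, and \`(i, a)\` is adjacent to \`(j, b)\` iff \`i\` and \`j\`
are consecutive modulo \`n\`. -/
def wreathGraph (n : ℕ) : SimpleGraph (ZMod n × Fin 2) :=
  SimpleGraph.fromRel (fun p q => p.1 + 1 = q.1)

/-!
A colouring with two colours either gives both vertices of some fibre `{(i, 0), (i, 1)}` the
same colour, and then swapping these two twins is a nontrivial colour-preserving automorphism;
or it colours every fibre with both colours, and then the rotation `i ↦ i + 1`, followed in each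
fibre by the swap that matches the colours again, is one.
-/

section Distinguishing

variable {V : Type*} {G : SimpleGraph V}

lemma isDistinguishing_of_injective {k : ℕ} {c : V → Fin k} (hc : Function.Injective c) :
    IsDistinguishing G c :=
  fun _ hγ v => hc (hγ v)

lemma IsDistinguishing.comp_injective {k m : ℕ} {c : V → Fin k} (hc : IsDistinguishing G c)
    {f : Fin k → Fin m} (hf : Function.Injective f) : IsDistinguishing G (f ∘ c) :=
  fun γ hγ => hc γ fun v => hf (hγ v)

lemma lt_distinguishingNumber [Fintype V] {k : ℕ}
    (h : ∀ c : V → Fin k, ¬ IsDistinguishing G c) : k < distinguishingNumber G := by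
  have hne : {k | ∃ c : V → Fin k, IsDistinguishing G c}.Nonempty :=
    ⟨_, _, isDistinguishing_of_injective (Fintype.equivFin V).injective⟩
  obtain ⟨c, hc⟩ := Nat.sInf_mem hne
  by_contra! hle
  exact h _ (hc.comp_injective (Fin.castLE_injective hle))

end Distinguishing

namespace wreathGraph

variable {n : ℕ} [Nontrivial (ZMod n)]

lemma adj_iff (p q : ZMod n × Fin 2) :
    (wreathGraph n).Adj p q ↔ p.1 + 1 = q.1 ∨ q.1 + 1 = p.1 := by
  refine ⟨fun h => h.2, fun h => ⟨?_, h⟩⟩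
  rintro rfl
  simp at h

def twistedRotation (k : ZMod n) (τ : ZMod n → Equiv.Perm (Fin 2)) :
    wreathGraph n ≃g wreathGraph n where
  toEquiv := Equiv.prodShear (Equiv.addRight k) τ
  map_rel_iff' := by simp [adj_iff, add_right_comm _ k 1]

@[simp]
lemma twistedRotation_apply (k : ZMod n) (τ : ZMod n → Equiv.Perm (Fin 2)) (i : ZMod n)
    (a : Fin 2) : twistedRotation k τ (i, a) = (i + k, τ i a) :=
  rfl

lemma not_isDistinguishing_of_fibre_monochromatic {k : ℕ} {c : ZMod n × Fin 2 → Fin k}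
    {i : ZMod n} (hi : c (i, 0) = c (i, 1)) : ¬ IsDistinguishing (wreathGraph n) c := by
  intro hc
  let τ : ZMod n → Equiv.Perm (Fin 2) := fun j => if j = i then Equiv.swap 0 1 else 1
  have hpres : ∀ v, c (twistedRotation 0 τ v) = c v := by
    rintro ⟨j, a⟩
    by_cases hj : j = i
    · subst hj
      fin_cases a <;> simp [τ, hi]
    · simp [τ, hj]
  simpa [τ] using hc _ hpres (i, 0)

lemma not_isDistinguishing_of_fibres_bichromatic {c : ZMod n × Fin 2 → Fin 2}
    (hc : ∀ i, c (i, 0) ≠ c (i, 1)) : ¬ IsDistinguishing (wreathGraph n) c := by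
  intro hd
  have hcolour : ∀ i a, c (i, a) = c (i, 0) + a := by
    intro i a
    have hflip : ∀ x y : Fin 2, x ≠ y → y = x + 1 := by decide
    fin_cases a
    · simp
    · exact hflip _ _ (hc i)
  let τ : ZMod n → Equiv.Perm (Fin 2) := fun i => Equiv.addRight (c (i, 0) + c (i + 1, 0))
  have hpres : ∀ v, c (twistedRotation 1 τ v) = c v := by
    rintro ⟨i, a⟩
    have hchar : ∀ a x y : Fin 2, y + (a + (x + y)) = x + a := by decide
    simp only [twistedRotation_apply, τ, Equiv.coe_addRight]
    rw [hcolour, hcolour i a, hchar]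
  simpa using congrArg Prod.fst (hd _ hpres (0, 0))

lemma not_isDistinguishing_fin_two (c : ZMod n × Fin 2 → Fin 2) :
    ¬ IsDistinguishing (wreathGraph n) c := by
  by_cases hmono : ∃ i, c (i, 0) = c (i, 1)
  · obtain ⟨i, hi⟩ := hmono
    exact not_isDistinguishing_of_fibre_monochromatic hi
  · exact not_isDistinguishing_of_fibres_bichromatic fun i hi => hmono ⟨i, hi⟩

end wreathGraph

theorem two_lt_distinguishingNumber_wreathGraph (n : ℕ) [NeZero n] (hn : 3 ≤ n) :
    2 < distinguishingNumber (wreathGraph n) := by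
  have : Fact (1 < n) := ⟨by omega⟩
  exact lt_distinguishingNumber wreathGraph.not_isDistinguishing_fin_two
end

section
/- For every n ≥ 5, the wreath graph W_n has distinguishing number exactly 3. -/
open SimpleGraph

namespace WreathAux

lemma fin2_add_self : ∀ x : Fin 2, x + x = 0 := by decide

lemma fin2_cases : ∀ a : Fin 2, a = 0 ∨ a = 1 := by decide

lemma fin2_eq_add_one : ∀ x y : Fin 2, x ≠ y → y = x + 1 := by decide

lemma fin2_three : ∀ b1 b2 b3 : Fin 2, b1 ≠ b2 → b1 ≠ b3 → b2 ≠ b3 → False := by decide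

lemma zmod_natCast_ne_zero {n m : ℕ} (hm : 0 < m) (h : m < n) : (m : ZMod n) ≠ 0 := by
  intro h0
  rw [ZMod.natCast_eq_zero_iff] at h0
  exact absurd (Nat.le_of_dvd hm h0) (not_le.mpr h)

lemma one_ne_zero' {n : ℕ} (h : 5 ≤ n) : (1 : ZMod n) ≠ 0 := by
  have := zmod_natCast_ne_zero (n := n) (m := 1) one_pos (by omega)
  simpa using this

lemma two_ne_zero' {n : ℕ} (h : 5 ≤ n) : (2 : ZMod n) ≠ 0 := by
  have := zmod_natCast_ne_zero (n := n) (m := 2) (by omega) (by omega)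
  simpa using this

lemma four_ne_zero' {n : ℕ} (h : 5 ≤ n) : (4 : ZMod n) ≠ 0 := by
  have := zmod_natCast_ne_zero (n := n) (m := 4) (by omega) (by omega)
  simpa using this

lemma zero_ne_one' {n : ℕ} (h : 5 ≤ n) : (0 : ZMod n) ≠ 1 :=
  fun h0 => one_ne_zero' h h0.symm

/-- Adjacency in the wreath graph, for `n ≥ 5`. -/
lemma wreath_adj {n : ℕ} (hn : 5 ≤ n) (p q : ZMod n × Fin 2) :
    (wreathGraph n).Adj p q ↔ (p.1 + 1 = q.1 ∨ q.1 + 1 = p.1) := by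
  rw [wreathGraph, SimpleGraph.fromRel_adj]
  constructor
  · rintro ⟨-, h⟩; exact h
  · intro h
    refine ⟨?_, h⟩
    rintro rfl
    have h1 : (1 : ZMod n) ≠ 0 := one_ne_zero' hn
    rcases h with h | h <;> exact h1 (by linear_combination h)

/-- The intersection lemma : two common "cycle neighbours" of distinct fibres coincide. -/
lemma adj_cases {n : ℕ} (hn : 5 ≤ n) {p q u v : ZMod n}
    (hpq : p ≠ q)
    (hu1 : p + 1 = u ∨ u + 1 = p) (hu2 : q + 1 = u ∨ u + 1 = q)
    (hv1 : p + 1 = v ∨ v + 1 = p) (hv2 : q + 1 = v ∨ v + 1 = q) : u = v := by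
  have h4 : (4 : ZMod n) ≠ 0 := four_ne_zero' hn
  have key : ∀ w : ZMod n, (p + 1 = w ∨ w + 1 = p) → (q + 1 = w ∨ w + 1 = q) →
      (w = p + 1 ∧ q = p + 2) ∨ (w = p - 1 ∧ q = p - 2) := by
    intro w hw1 hw2
    rcases hw1 with h1 | h1 <;> rcases hw2 with h2 | h2
    · exact absurd (by linear_combination h1 - h2) hpq
    · exact Or.inl ⟨h1.symm, by linear_combination -h1 - h2⟩
    · exact Or.inr ⟨by linear_combination h1, by linear_combination h1 + h2⟩
    · exact absurd (by linear_combination h2 - h1) hpq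
  rcases key u hu1 hu2 with ⟨hu, hq⟩ | ⟨hu, hq⟩ <;>
    rcases key v hv1 hv2 with ⟨hv, hq'⟩ | ⟨hv, hq'⟩
  · rw [hu, hv]
  · exact absurd (by linear_combination hq' - hq) h4
  · exact absurd (by linear_combination hq - hq') h4
  · rw [hu, hv]

/-- A graph automorphism of the wreath graph maps fibres into fibres. -/
lemma fiber_eq {n : ℕ} (hn : 5 ≤ n) (γ : wreathGraph n ≃g wreathGraph n)
    (i : ZMod n) (a b : Fin 2) : (γ (i, a)).1 = (γ (i, b)).1 := by
  have h2 : (2 : ZMod n) ≠ 0 := two_ne_zero' hn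
  by_cases hab : a = b
  · rw [hab]
  -- suppose the first coordinates differ
  by_contra hne
  set p := γ (i, a) with hp
  set q := γ (i, b) with hq
  -- the four neighbours of (i, a) (and of (i, b))
  have hadj : ∀ c : Fin 2, (wreathGraph n).Adj (i, a) (i + 1, c) ∧
      (wreathGraph n).Adj (i, a) (i - 1, c) ∧
      (wreathGraph n).Adj (i, b) (i + 1, c) ∧
      (wreathGraph n).Adj (i, b) (i - 1, c) := by
    intro c
    refine ⟨?_, ?_, ?_, ?_⟩ <;> rw [wreath_adj hn] <;> simp [sub_add_cancel]
  have himg : ∀ c : Fin 2, (γ (i + 1, c)).1 = (γ (i + 1, 0)).1 ∧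
      (γ (i - 1, c)).1 = (γ (i + 1, 0)).1 := by
    intro c
    have A := (hadj c).1
    have B := (hadj c).2.1
    have A' := (hadj c).2.2.1
    have B' := (hadj c).2.2.2
    have A0 := (hadj 0).1
    have A0' := (hadj 0).2.2.1
    -- adjacency of images
    have mA := γ.map_rel_iff.mpr A
    have mB := γ.map_rel_iff.mpr B
    have mA' := γ.map_rel_iff.mpr A'
    have mB' := γ.map_rel_iff.mpr B'
    have mA0 := γ.map_rel_iff.mpr A0
    have mA0' := γ.map_rel_iff.mpr A0'
    rw [wreath_adj hn] at mA mB mA' mB' mA0 mA0'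
    constructor
    · exact adj_cases hn hne mA mA' mA0 mA0'
    · exact adj_cases hn hne mB mB' mA0 mA0'
  -- now γ (i+1, 0), γ (i+1, 1), γ (i-1, 0) are three distinct vertices in one fibre
  have hd1 : γ (i + 1, (0 : Fin 2)) ≠ γ (i + 1, 1) := by
    intro h; have := γ.injective h; simp at this
  have hd2 : γ (i + 1, (0 : Fin 2)) ≠ γ (i - 1, 0) := by
    intro h; have := γ.injective h
    have : (i : ZMod n) + 1 = i - 1 := congrArg Prod.fst this
    exact h2 (by linear_combination this)
  have hd3 : γ (i + 1, (1 : Fin 2)) ≠ γ (i - 1, 0) := by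
    intro h; have := γ.injective h
    have : (i : ZMod n) + 1 = i - 1 := congrArg Prod.fst this
    exact h2 (by linear_combination this)
  have e1 : (γ (i + 1, (1 : Fin 2))).1 = (γ (i + 1, 0)).1 := (himg 1).1
  have e2 : (γ (i - 1, (0 : Fin 2))).1 = (γ (i + 1, 0)).1 := (himg 0).2
  exact fin2_three (γ (i + 1, 0)).2 (γ (i + 1, 1)).2 (γ (i - 1, 0)).2
    (fun h => hd1 (Prod.ext e1.symm h))
    (fun h => hd2 (Prod.ext e2.symm h))
    (fun h => hd3 (Prod.ext (e1.trans e2.symm) h))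


/-- The distinguishing 3-colouring. -/
def col (n : ℕ) (p : ZMod n × Fin 2) : Fin 3 :=
  if p.1 = 0 then (if p.2 = 0 then 0 else 1)
  else if p.1 = 1 then (if p.2 = 0 then 0 else 2)
  else if p.2 = 0 then 1 else 2

lemma col_snd_inj {n : ℕ} (i : ZMod n) (a b : Fin 2)
    (h : col n (i, a) = col n (i, b)) : a = b := by
  by_cases h0 : i = 0 <;> by_cases h1 : i = 1 <;> fin_cases a <;> fin_cases b <;>
    simp_all [col]

lemma col_char0 {n : ℕ} (v : ZMod n × Fin 2) (h : col n v = 0) :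
    v = ((0 : ZMod n), (0 : Fin 2)) ∨ v = ((1 : ZMod n), (0 : Fin 2)) := by
  obtain ⟨x, a⟩ := v
  rcases fin2_cases a with rfl | rfl <;> by_cases hx0 : x = 0 <;> by_cases hx1 : x = 1 <;>
    simp_all [col, Prod.ext_iff]

lemma col_distinguishing {n : ℕ} [NeZero n] (hn : 5 ≤ n) :
    IsDistinguishing (wreathGraph n) (col n) := by
  intro γ hc
  have h1 : (1 : ZMod n) ≠ 0 := one_ne_zero' hn
  have h2 : (2 : ZMod n) ≠ 0 := two_ne_zero' hn
  set π : ZMod n → ZMod n := fun i => (γ (i, 0)).1 with hπ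
  have hfib : ∀ (i : ZMod n) (a : Fin 2), (γ (i, a)).1 = π i := fun i a =>
    fiber_eq hn γ i a 0
  have πinj : Function.Injective π := by
    intro i j hij
    by_contra hne
    have d1 : γ (i, (0 : Fin 2)) ≠ γ (i, 1) := fun h => by
      have := γ.injective h; simp at this
    have d2 : γ (i, (0 : Fin 2)) ≠ γ (j, 0) := fun h => by
      have := γ.injective h; simp_all
    have d3 : γ (i, (1 : Fin 2)) ≠ γ (j, 0) := fun h => by
      have := γ.injective h; simp_all
    have e1 : (γ (i, (1 : Fin 2))).1 = (γ (i, 0)).1 := fiber_eq hn γ i 1 0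
    have e2 : (γ (j, (0 : Fin 2))).1 = (γ (i, 0)).1 := hij.symm
    exact fin2_three _ _ _ (fun h => d1 (Prod.ext e1.symm h))
      (fun h => d2 (Prod.ext e2.symm h))
      (fun h => d3 (Prod.ext (e1.trans e2.symm) h))
  have πadj : ∀ i : ZMod n, π (i + 1) = π i + 1 ∨ π i = π (i + 1) + 1 := by
    intro i
    have hA : (wreathGraph n).Adj (i, 0) (i + 1, 0) := by
      rw [wreath_adj hn]; left; rfl
    have := γ.map_rel_iff.mpr hA
    rw [wreath_adj hn] at this
    rcases this with h | h
    · exact Or.inl h.symm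
    · exact Or.inr h.symm
  -- colours of fibre 1 vertices are never 1
  have hne1 : ∀ b : Fin 2, col n ((1 : ZMod n), b) ≠ 1 := by
    intro b; fin_cases b <;> simp [col, h1]
  have hcol00 : col n ((0 : ZMod n), (0 : Fin 2)) = 0 := by simp [col]
  have hcol01 : col n ((0 : ZMod n), (1 : Fin 2)) = 1 := by simp [col]
  have hcol10 : col n ((1 : ZMod n), (0 : Fin 2)) = 0 := by simp [col, h1]
  have g00 : γ ((0 : ZMod n), (0 : Fin 2)) = (0, 0) := by
    rcases col_char0 _ ((hc (0, 0)).trans hcol00) with h | h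
    · exact h
    · exfalso
      have hπ0 : π 0 = 1 := by
        have := congrArg Prod.fst h
        rw [← hfib 0 0]; exact this
      have hfst : (γ ((0 : ZMod n), (1 : Fin 2))).1 = 1 := (hfib 0 1).trans hπ0
      have hcv : col n (γ ((0 : ZMod n), (1 : Fin 2))) = 1 := (hc (0, 1)).trans hcol01
      have hrw : γ ((0 : ZMod n), (1 : Fin 2)) = (1, (γ ((0 : ZMod n), (1 : Fin 2))).2) :=
        Prod.ext hfst rfl
      rw [hrw] at hcv
      exact hne1 _ hcv
  have g10 : γ ((1 : ZMod n), (0 : Fin 2)) = (1, 0) := by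
    rcases col_char0 _ ((hc (1, 0)).trans hcol10) with h | h
    · exfalso
      have := γ.injective (h.trans g00.symm)
      have := congrArg Prod.fst this
      exact h1 this
    · exact h
  have π0 : π 0 = 0 := by rw [← hfib 0 0, g00]
  have π1 : π 1 = 1 := by rw [← hfib 1 0, g10]
  have main : ∀ k : ℕ, π ((k : ℕ) : ZMod n) = (k : ZMod n) ∧
      π ((k : ZMod n) + 1) = (k : ZMod n) + 1 := by
    intro k
    induction k with
    | zero => refine ⟨by simpa using π0, by simpa using π1⟩
    | succ k ih =>
      obtain ⟨hk, hk1⟩ := ih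
      have cast1 : ((k + 1 : ℕ) : ZMod n) = (k : ZMod n) + 1 := by push_cast; ring
      refine ⟨by rw [cast1]; exact hk1, ?_⟩
      rw [cast1]
      rcases πadj ((k : ZMod n) + 1) with h | h
      · rw [h, hk1]
      · exfalso
        have hval : π ((k : ZMod n) + 1 + 1) = (k : ZMod n) := by
          linear_combination hk1 - h
        have := πinj (hval.trans hk.symm)
        exact two_ne_zero' hn (by linear_combination this)
  have πid : ∀ i : ZMod n, π i = i := by
    intro i
    have := (main i.val).1
    rwa [ZMod.natCast_zmod_val] at this
  rintro ⟨i, a⟩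
  have hfst : (γ (i, a)).1 = i := (hfib i a).trans (πid i)
  have hrw : γ (i, a) = (i, (γ (i, a)).2) := Prod.ext hfst rfl
  have hcv := hc (i, a)
  rw [hrw] at hcv
  exact Prod.ext hfst (col_snd_inj i _ a hcv)

/-- Swapping the two vertices of the fibre `i0`. -/
def fiberSwapEquiv (n : ℕ) (i0 : ZMod n) : (ZMod n × Fin 2) ≃ (ZMod n × Fin 2) where
  toFun p := (p.1, if p.1 = i0 then p.2 + 1 else p.2)
  invFun p := (p.1, if p.1 = i0 then p.2 + 1 else p.2)
  left_inv p := by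
    have h11 : ∀ b : Fin 2, b + 1 + 1 = b := by decide
    refine Prod.ext rfl ?_
    show (if p.1 = i0 then (if p.1 = i0 then p.2 + 1 else p.2) + 1
        else if p.1 = i0 then p.2 + 1 else p.2) = p.2
    by_cases h : p.1 = i0
    · simp only [if_pos h]; exact h11 p.2
    · simp only [if_neg h]
  right_inv p := by
    have h11 : ∀ b : Fin 2, b + 1 + 1 = b := by decide
    refine Prod.ext rfl ?_
    show (if p.1 = i0 then (if p.1 = i0 then p.2 + 1 else p.2) + 1
        else if p.1 = i0 then p.2 + 1 else p.2) = p.2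
    by_cases h : p.1 = i0
    · simp only [if_pos h]; exact h11 p.2
    · simp only [if_neg h]

def fiberSwap {n : ℕ} (hn : 5 ≤ n) (i0 : ZMod n) : wreathGraph n ≃g wreathGraph n :=
  ⟨fiberSwapEquiv n i0, by
    intro p q
    rw [wreath_adj hn, wreath_adj hn]
    show (p.1 + 1 = q.1 ∨ q.1 + 1 = p.1) ↔ _
    exact Iff.rfl⟩

lemma fiberSwap_apply {n : ℕ} (hn : 5 ≤ n) (i0 : ZMod n) (p : ZMod n × Fin 2) :
    fiberSwap hn i0 p = (p.1, if p.1 = i0 then p.2 + 1 else p.2) := rfl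

/-- The rotation automorphism, shifting fibres by one and permuting within
fibres according to `d`. -/
def rotEquiv (n : ℕ) (d : ZMod n → Fin 2) : (ZMod n × Fin 2) ≃ (ZMod n × Fin 2) where
  toFun p := (p.1 + 1, p.2 + d p.1)
  invFun p := (p.1 - 1, p.2 + d (p.1 - 1))
  left_inv p := by
    have e : p.1 + 1 - 1 = p.1 := by ring
    have h11 : ∀ (b x : Fin 2), b + x + x = b := by decide
    refine Prod.ext ?_ ?_
    · exact e
    · show p.2 + d p.1 + d (p.1 + 1 - 1) = p.2
      rw [e]; exact h11 _ _
  right_inv p := by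
    have e : p.1 - 1 + 1 = p.1 := by ring
    have h11 : ∀ (b x : Fin 2), b + x + x = b := by decide
    refine Prod.ext ?_ ?_
    · exact e
    · show p.2 + d (p.1 - 1) + d (p.1 - 1) = p.2
      exact h11 _ _

def rot {n : ℕ} (hn : 5 ≤ n) (d : ZMod n → Fin 2) : wreathGraph n ≃g wreathGraph n :=
  ⟨rotEquiv n d, by
    intro p q
    rw [wreath_adj hn, wreath_adj hn]
    show (p.1 + 1 + 1 = q.1 + 1 ∨ q.1 + 1 + 1 = p.1 + 1) ↔ _
    constructor
    · rintro (h | h)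
      · exact Or.inl (by linear_combination h)
      · exact Or.inr (by linear_combination h)
    · rintro (h | h)
      · exact Or.inl (by linear_combination h)
      · exact Or.inr (by linear_combination h)⟩

lemma rot_apply {n : ℕ} (hn : 5 ≤ n) (d : ZMod n → Fin 2) (p : ZMod n × Fin 2) :
    rot hn d p = (p.1 + 1, p.2 + d p.1) := rfl

lemma not_distinguishing_of_le_two {n : ℕ} [NeZero n] (hn : 5 ≤ n) {k : ℕ} (hk : k ≤ 2)
    (c : ZMod n × Fin 2 → Fin k) : ¬ IsDistinguishing (wreathGraph n) c := by
  intro hdist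
  by_cases hmono : ∃ i : ZMod n, c (i, 0) = c (i, 1)
  · obtain ⟨i0, hi0⟩ := hmono
    have hpres : ∀ v, c (fiberSwap hn i0 v) = c v := by
      rintro ⟨j, b⟩
      rw [fiberSwap_apply]
      by_cases hj : j = i0
      · subst hj; fin_cases b <;> simp_all
      · simp [hj]
    have hγ := hdist (fiberSwap hn i0) hpres (i0, 0)
    rw [fiberSwap_apply] at hγ
    simp at hγ
  · push_neg at hmono
    interval_cases k
    · exact (c (0, 0)).elim0
    · exact hmono 0 (Subsingleton.elim _ _)
    · set d : ZMod n → Fin 2 := fun i => c (i, 0) + c (i + 1, 0) with hd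
      have hrep : ∀ (i : ZMod n) (a : Fin 2), c (i, a) = c (i, 0) + a := by
        intro i a
        rcases fin2_cases a with rfl | rfl
        · exact (add_zero _).symm
        · exact fin2_eq_add_one _ _ (hmono i)
      have hpres : ∀ v, c (rot hn d v) = c v := by
        rintro ⟨i, a⟩
        rw [rot_apply]
        rw [hrep (i + 1), hrep i]
        show c (i + 1, 0) + (a + (c (i, 0) + c (i + 1, 0))) = c (i, 0) + a
        have key : ∀ x y z : Fin 2, x + (y + (z + x)) = z + y := by decide
        exact key _ _ _
      have hγ := hdist (rot hn d) hpres (0, 0)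
      rw [rot_apply] at hγ
      have h0 : (0 : ZMod n) + 1 = 0 := congrArg Prod.fst hγ
      exact one_ne_zero' hn (by linear_combination h0)

end WreathAux

theorem distinguishingNumber_wreathGraph (n : ℕ) [NeZero n] (hn : 5 ≤ n) :
    distinguishingNumber (wreathGraph n) = 3 := by
  have h3 : 3 ∈ {k | ∃ c : ZMod n × Fin 2 → Fin k, IsDistinguishing (wreathGraph n) c} :=
    ⟨WreathAux.col n, WreathAux.col_distinguishing hn⟩
  refine le_antisymm (Nat.sInf_le h3) (le_csInf ⟨3, h3⟩ ?_)
  rintro k ⟨c, hc⟩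
  by_contra hlt
  exact WreathAux.not_distinguishing_of_le_two hn (by omega) c hc
end

section
/- The hypercube graph Q_4 has distinguishing number 2. -/
open SimpleGraph

/-- The 4-dimensional hypercube graph: vertices are elements of `{0,1}^4`, and two
vertices are adjacent iff they differ in exactly one coordinate. -/
def hypercubeQ4 : SimpleGraph (Fin 4 → Fin 2) where
  Adj x y := (Finset.univ.filter fun i => x i ≠ y i).card = 1
  symm := by
    constructor
    intro x y h
    have : (Finset.univ.filter fun i => y i ≠ x i) =
        (Finset.univ.filter fun i => x i ≠ y i) := by
      apply Finset.filter_congr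
      intro i _
      simp [ne_comm]
    rw [this]
    exact h
  loopless := by constructor; intro x h; simp at h

/-!
Translation by `1` (the antipodal map) is a nontrivial automorphism of `Q_4`, so one colour is
not enough. Automorphisms preserve graph distance, which on `Q_4` is Hamming distance. For the
2-colouring below (found by a computer search) every vertex is determined by its own colour
together with the number of colour-0 vertices at each distance from it, so an automorphism
preserving the colours fixes every vertex.
-/

open Finset Function

section Hamming

variable {ι : Type*} [Fintype ι] {β : ι → Type*} [∀ i, DecidableEq (β i)]

lemma hammingDist_update_of_ne [DecidableEq ι] {x : ∀ i, β i} {i : ι} {a : β i}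
    (h : x i ≠ a) : hammingDist x (update x i a) = 1 := by
  rw [hammingDist, card_eq_one]
  refine ⟨i, eq_singleton_iff_unique_mem.2 ⟨by simpa using h, fun j hj => ?_⟩⟩
  by_contra hji
  simp [update_of_ne hji] at hj

lemma hammingDist_update_apply_of_ne [DecidableEq ι] {x y : ∀ i, β i} {i : ι}
    (h : x i ≠ y i) : hammingDist (update x i (y i)) y = hammingDist x y - 1 := by
  have hsupport : ({j | update x i (y i) j ≠ y j} : Finset ι) =
      ({j | x j ≠ y j} : Finset ι).erase i := by
    ext j
    by_cases hji : j = i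
    · subst hji; simp
    · simp [hji]
  rw [hammingDist, hammingDist, hsupport, card_erase_of_mem (by simpa using h)]

namespace SimpleGraph

variable {G : SimpleGraph (∀ i, β i)}

lemma hammingDist_le_length (hG : ∀ x y, G.Adj x y ↔ hammingDist x y = 1) {x y : ∀ i, β i}
    (p : G.Walk x y) : hammingDist x y ≤ p.length := by
  induction p with
  | nil => simp
  | @cons x z y hxz _ ih =>
    calc hammingDist x y ≤ hammingDist x z + hammingDist z y := hammingDist_triangle x z y
      _ ≤ _ := by rw [(hG x z).1 hxz, Walk.length_cons]; omega

lemma exists_walk_length_eq_hammingDist [DecidableEq ι]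
    (hG : ∀ x y, G.Adj x y ↔ hammingDist x y = 1) (x y : ∀ i, β i) :
    ∃ p : G.Walk x y, p.length = hammingDist x y := by
  induction h : hammingDist x y generalizing x with
  | zero =>
    obtain rfl := hammingDist_eq_zero.1 h
    exact ⟨.nil, rfl⟩
  | succ n ih =>
    obtain ⟨i, hi⟩ : ∃ i, x i ≠ y i := by
      by_contra! hxy
      simp [funext hxy] at h
    obtain ⟨p, hp⟩ := ih (update x i (y i)) (by rw [hammingDist_update_apply_of_ne hi, h]; rfl)
    exact ⟨.cons ((hG _ _).2 (hammingDist_update_of_ne hi)) p, by simp [hp]⟩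

theorem dist_eq_hammingDist (hG : ∀ x y, G.Adj x y ↔ hammingDist x y = 1) (x y : ∀ i, β i) :
    G.dist x y = hammingDist x y := by
  classical
  obtain ⟨p, hp⟩ := exists_walk_length_eq_hammingDist hG x y
  obtain ⟨q, hq⟩ := p.reachable.exists_walk_length_eq_dist
  exact le_antisymm (hp ▸ dist_le p) (hq ▸ hammingDist_le_length hG q)

def addRightIso [∀ i, AddGroup (β i)] (hG : ∀ x y, G.Adj x y ↔ hammingDist x y = 1)
    (v : ∀ i, β i) : G ≃g G where
  toEquiv := Equiv.addRight v
  map_rel_iff' {x y} := by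
    simp only [Equiv.coe_addRight, hG]
    exact iff_of_eq <| congrArg (· = 1) <|
      hammingDist_comp (fun i => (· + v i)) fun i => add_left_injective (v i)

end SimpleGraph

end Hamming

namespace SimpleGraph

variable {V W : Type*} {G : SimpleGraph V} {H : SimpleGraph W}

lemma Hom.edist_le (f : G →g H) (u v : V) : H.edist (f u) (f v) ≤ G.edist u v :=
  le_iInf fun p => (SimpleGraph.edist_le (p.map f)).trans_eq (by simp)

lemma Iso.dist_eq (γ : G ≃g H) (u v : V) : H.dist (γ u) (γ v) = G.dist u v := by
  refine congrArg ENat.toNat (le_antisymm (Hom.edist_le γ.toHom u v) ?_)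
  simpa using Hom.edist_le γ.symm.toHom (γ u) (γ v)

variable [Fintype V] {k : ℕ}

noncomputable def colourCountAtDist (G : SimpleGraph V) (c : V → Fin k) (x : V) (i : Fin k)
    (d : ℕ) : ℕ :=
  #{y | c y = i ∧ G.dist x y = d}

lemma colourCountAtDist_apply {c : V → Fin k} (γ : G ≃g G) (hγ : ∀ v, c (γ v) = c v)
    (x : V) (i : Fin k) (d : ℕ) :
    colourCountAtDist G c (γ x) i d = colourCountAtDist G c x i d := by
  refine (card_equiv γ.toEquiv fun y => ?_).symm
  simp [hγ, γ.dist_eq]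

lemma isDistinguishing_of_colourCountAtDist {c : V → Fin k}
    (h : ∀ x y, c x = c y →
      (∀ i d, colourCountAtDist G c x i d = colourCountAtDist G c y i d) → x = y) :
    IsDistinguishing G c :=
  fun γ hγ x => h _ _ (hγ x) (colourCountAtDist_apply γ hγ x)

end SimpleGraph

lemma IsDistinguishing.two_le {V : Type*} {G : SimpleGraph V} {k : ℕ} {c : V → Fin k}
    (hc : IsDistinguishing G c) {γ : G ≃g G} {x : V} (hx : γ x ≠ x) : 2 ≤ k := by
  by_contra hk
  have : Subsingleton (Fin k) := Fin.subsingleton_iff_le_one.2 (by omega)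
  exact hx (hc γ (fun _ => Subsingleton.elim _ _) x)

theorem distinguishingNumber_eq_two {V : Type*} [Fintype V] {G : SimpleGraph V} {γ : G ≃g G}
    {x : V} (hx : γ x ≠ x) {c : V → Fin 2} (hc : IsDistinguishing G c) :
    distinguishingNumber G = 2 :=
  le_antisymm (Nat.sInf_le ⟨c, hc⟩) <|
    le_csInf ⟨2, c, hc⟩ fun _ ⟨_, hc'⟩ => hc'.two_le hx

lemma hypercubeQ4_adj_iff (x y : Fin 4 → Fin 2) : hypercubeQ4.Adj x y ↔ hammingDist x y = 1 :=
  Iff.rfl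

def hypercubeQ4Colouring (x : Fin 4 → Fin 2) : Fin 2 :=
  if x ∈ ({![0,0,0,0], ![1,0,0,0], ![0,1,0,0], ![0,0,1,0], ![0,0,0,1],
      ![1,1,0,0], ![0,1,1,0], ![0,1,1,1]} : Finset (Fin 4 → Fin 2)) then 0 else 1

lemma hypercubeQ4Colouring_separates : ∀ x y : Fin 4 → Fin 2,
    hypercubeQ4Colouring x = hypercubeQ4Colouring y →
    (∀ d : Fin 5, #{z | hypercubeQ4Colouring z = 0 ∧ hammingDist x z = d} =
      #{z | hypercubeQ4Colouring z = 0 ∧ hammingDist y z = d}) → x = y := by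
  decide

lemma isDistinguishing_hypercubeQ4Colouring :
    IsDistinguishing hypercubeQ4 hypercubeQ4Colouring := by
  refine isDistinguishing_of_colourCountAtDist fun x y hxy hcount =>
    hypercubeQ4Colouring_separates x y hxy fun d => ?_
  simpa [colourCountAtDist, dist_eq_hammingDist hypercubeQ4_adj_iff] using hcount 0 d

theorem distinguishingNumber_hypercubeQ4 :
    distinguishingNumber hypercubeQ4 = 2 :=
  distinguishingNumber_eq_two (γ := addRightIso hypercubeQ4_adj_iff 1) (x := 0) (by decide)
    isDistinguishing_hypercubeQ4Colouring
end

section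
/- The graph K_4 □ K_2 (the Cartesian product of K_4 with K_2) has distinguishing number 3. -/
open SimpleGraph

/-- Explicit description of adjacency in `K₄ □ K₂`. -/
def A (x y : Fin 4 × Fin 2) : Prop := (x.1 ≠ y.1 ∧ x.2 = y.2) ∨ (x.2 ≠ y.2 ∧ x.1 = y.1)
instance (x y : Fin 4 × Fin 2) : Decidable (A x y) := by unfold A; infer_instance

lemma adj_iff_A : ∀ x y : Fin 4 × Fin 2,
    ((completeGraph (Fin 4)).boxProd (completeGraph (Fin 2))).Adj x y ↔ A x y := by
  intro x y; simp [SimpleGraph.boxProd_adj, completeGraph, A]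

/-- Product automorphisms of `K₄ □ K₂`. -/
def autOf (σ : Equiv.Perm (Fin 4)) (τ : Equiv.Perm (Fin 2)) :
    ((completeGraph (Fin 4)).boxProd (completeGraph (Fin 2))) ≃g
      ((completeGraph (Fin 4)).boxProd (completeGraph (Fin 2))) where
  toEquiv := σ.prodCongr τ
  map_rel_iff' := by intro a b; simp [SimpleGraph.boxProd_adj, completeGraph]

/-- The distinguishing 3-colouring. -/
def c3 : Fin 4 × Fin 2 → Fin 3 := fun v => ![![0,0],![1,1],![2,2],![0,1]] v.1 v.2

def S0 : Fin 3 → Fin 4 × Fin 2 := ![(0,0), (0,1), (3,0)]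
def S1 : Fin 3 → Fin 4 × Fin 2 := ![(1,0), (1,1), (3,1)]
def S2 : Fin 2 → Fin 4 × Fin 2 := ![(2,0), (2,1)]

def wfun (a b c d e f : Fin 3) (g h : Fin 2) : Fin 4 × Fin 2 → Fin 4 × Fin 2 :=
  fun u =>
    if u = (0,0) then S0 a else if u = (0,1) then S0 b else if u = (3,0) then S0 c
    else if u = (1,0) then S1 d else if u = (1,1) then S1 e else if u = (3,1) then S1 f
    else if u = (2,0) then S2 g else S2 h

set_option maxRecDepth 10000 in
lemma fix_aux : ∀ (a b c d e f : Fin 3) (g h : Fin 2),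
    (∀ u v : Fin 4 × Fin 2, A (wfun a b c d e f g h u) (wfun a b c d e f g h v) ↔ A u v) →
    ∀ u, wfun a b c d e f g h u = u := by decide

lemma hex0 : ∀ w : Fin 4 × Fin 2, c3 w = 0 → ∃ x : Fin 3, w = S0 x := by decide
lemma hex1 : ∀ w : Fin 4 × Fin 2, c3 w = 1 → ∃ x : Fin 3, w = S1 x := by decide
lemma hex2 : ∀ w : Fin 4 × Fin 2, c3 w = 2 → ∃ x : Fin 2, w = S2 x := by decide

lemma c3_distinguishing :
    IsDistinguishing ((completeGraph (Fin 4)).boxProd (completeGraph (Fin 2))) c3 := by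
  intro γ hc
  obtain ⟨a, ha⟩ := hex0 _ (hc (0,0))
  obtain ⟨b, hb⟩ := hex0 _ (hc (0,1))
  obtain ⟨c, hcc⟩ := hex0 _ (hc (3,0))
  obtain ⟨d, hd⟩ := hex1 _ (hc (1,0))
  obtain ⟨e, he⟩ := hex1 _ (hc (1,1))
  obtain ⟨f, hf⟩ := hex1 _ (hc (3,1))
  obtain ⟨g, hg⟩ := hex2 _ (hc (2,0))
  obtain ⟨h, hh⟩ := hex2 _ (hc (2,1))
  have hw : ∀ u, γ u = wfun a b c d e f g h u := by
    have hcover : ∀ u : Fin 4 × Fin 2, u = (0,0) ∨ u = (0,1) ∨ u = (3,0) ∨ u = (1,0) ∨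
        u = (1,1) ∨ u = (3,1) ∨ u = (2,0) ∨ u = (2,1) := by decide
    intro u
    rcases hcover u with rfl|rfl|rfl|rfl|rfl|rfl|rfl|rfl <;>
      simp only [wfun] <;> first
        | exact ha | exact hb | exact hcc | exact hd | exact he | exact hf | exact hg | exact hh
  have hadj : ∀ u v : Fin 4 × Fin 2,
      A (wfun a b c d e f g h u) (wfun a b c d e f g h v) ↔ A u v := by
    intro u v
    rw [← hw u, ← hw v, ← adj_iff_A, ← adj_iff_A]
    exact γ.map_rel_iff
  intro u
  rw [hw u]
  exact fix_aux a b c d e f g h hadj u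

set_option maxRecDepth 10000 in
lemma twoColor_aux : ∀ cc : Fin 4 × Fin 2 → Fin 2, ∃ i j : Fin 4, i ≠ j ∧
    ((∀ v : Fin 4 × Fin 2, cc (Equiv.swap i j v.1, v.2) = cc v) ∨
     (∀ v : Fin 4 × Fin 2, cc (Equiv.swap i j v.1, Equiv.swap 0 1 v.2) = cc v)) := by decide

lemma no_two :
    ∀ cc : Fin 4 × Fin 2 → Fin 2,
      ¬ IsDistinguishing ((completeGraph (Fin 4)).boxProd (completeGraph (Fin 2))) cc := by
  intro cc hdist
  obtain ⟨i, j, hij, hcase⟩ := twoColor_aux cc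
  rcases hcase with hpre | hpre
  · have := hdist (autOf (Equiv.swap i j) 1) (fun v => hpre v) (i, 0)
    have h1 : (autOf (Equiv.swap i j) 1) (i, 0) = (j, (0:Fin 2)) := by
      simp [autOf, Equiv.swap_apply_left]
    rw [h1] at this
    exact hij (congrArg Prod.fst this).symm
  · have := hdist (autOf (Equiv.swap i j) (Equiv.swap 0 1)) (fun v => hpre v) (i, 0)
    have h1 : (autOf (Equiv.swap i j) (Equiv.swap 0 1)) (i, 0) = (j, (1:Fin 2)) := by
      simp [autOf, Equiv.swap_apply_left]
    rw [h1] at this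
    exact hij (congrArg Prod.fst this).symm

theorem distinguishingNumber_K4_prism :
    distinguishingNumber ((completeGraph (Fin 4)).boxProd (completeGraph (Fin 2))) = 3 := by
  have h3 : 3 ∈ {k | ∃ c : (Fin 4 × Fin 2) → Fin k,
      IsDistinguishing ((completeGraph (Fin 4)).boxProd (completeGraph (Fin 2))) c} :=
    ⟨c3, c3_distinguishing⟩
  have hne : {k | ∃ c : (Fin 4 × Fin 2) → Fin k,
      IsDistinguishing ((completeGraph (Fin 4)).boxProd (completeGraph (Fin 2))) c}.Nonempty :=
    ⟨3, h3⟩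
  have hmem := Nat.sInf_mem hne
  have hle : distinguishingNumber ((completeGraph (Fin 4)).boxProd (completeGraph (Fin 2))) ≤ 3 :=
    Nat.sInf_le h3
  obtain ⟨c, hcdist⟩ := hmem
  by_contra hne3
  have hlt : sInf {k | ∃ c : (Fin 4 × Fin 2) → Fin k,
      IsDistinguishing ((completeGraph (Fin 4)).boxProd (completeGraph (Fin 2))) c} ≤ 2 := by
    have := hle
    unfold distinguishingNumber at *
    omega
  have hcast : IsDistinguishing ((completeGraph (Fin 4)).boxProd (completeGraph (Fin 2)))
      (fun v => Fin.castLE hlt (c v)) := by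
    intro γ hγ v
    exact hcdist γ (fun u => Fin.castLE_injective hlt (hγ u)) v
  exact no_two _ hcast
end

section
/- The rook's graph K_3 □ K_3 has distinguishing number 3. -/
open SimpleGraph

namespace RookAux

abbrev Rook : SimpleGraph (Fin 3 × Fin 3) :=
  (completeGraph (Fin 3)).boxProd (completeGraph (Fin 3))

instance decCG : DecidableRel (completeGraph (Fin 3)).Adj := fun a b =>
  decidable_of_iff (a ≠ b) Iff.rfl

instance decAdj : DecidableRel Rook.Adj := fun x y =>
  decidable_of_iff _ (SimpleGraph.boxProd_adj).symm

/-- An automorphism of the rook graph from two permutations and an optional transpose. -/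
def autOf (σ τ : Equiv.Perm (Fin 3)) (s : Bool) : Rook ≃g Rook where
  toEquiv := (if s then Equiv.prodComm (Fin 3) (Fin 3) else Equiv.refl _).trans
      (Equiv.prodCongr σ τ)
  map_rel_iff' := by
    intro a b
    cases s <;>
      simp [SimpleGraph.boxProd_adj, completeGraph, Equiv.prodCongr_apply, ne_eq,
        EmbeddingLike.apply_eq_iff_eq] <;> tauto

/-- Six explicit permutations of `Fin 3`, covering all of `S₃`. -/
def p6 : Fin 6 → Equiv.Perm (Fin 3)
  | 0 => Equiv.refl _
  | 1 => Equiv.swap 0 1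
  | 2 => Equiv.swap 0 2
  | 3 => Equiv.swap 1 2
  | 4 => ⟨![1, 2, 0], ![2, 0, 1], by decide, by decide⟩
  | 5 => ⟨![2, 0, 1], ![1, 2, 0], by decide, by decide⟩

/-- A plain-function version of `autOf ∘ p6`. -/
def t6 : Fin 6 → Fin 3 → Fin 3 :=
  fun a => ![![0, 1, 2], ![1, 0, 2], ![2, 1, 0], ![0, 2, 1], ![1, 2, 0], ![2, 0, 1]] a

def F (a b : Fin 6) (s : Bool) (v : Fin 3 × Fin 3) : Fin 3 × Fin 3 :=
  let w := if s then (v.2, v.1) else v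
  (t6 a w.1, t6 b w.2)

set_option maxRecDepth 100000 in
lemma autOf_eq_F : ∀ a b : Fin 6, ∀ s : Bool, ∀ v, autOf (p6 a) (p6 b) s v = F a b s v := by
  decide

set_option maxRecDepth 100000 in
set_option maxHeartbeats 12000000 in
lemma keyF : ∀ c : Fin 3 × Fin 3 → Fin 2, ∃ a b : Fin 6, ∃ s : Bool,
    (∃ v, F a b s v ≠ v) ∧ ∀ v, c (F a b s v) = c v := by
  decide

lemma no_two_colouring :
    ∀ c : Fin 3 × Fin 3 → Fin 2, ∃ a b : Fin 6, ∃ s : Bool,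
      (∃ v, autOf (p6 a) (p6 b) s v ≠ v) ∧ ∀ v, c (autOf (p6 a) (p6 b) s v) = c v := by
  intro c
  obtain ⟨a, b, s, ⟨v, hv⟩, hp⟩ := keyF c
  exact ⟨a, b, s, ⟨v, by rw [autOf_eq_F]; exact hv⟩, fun v => by rw [autOf_eq_F]; exact hp v⟩

/-- The distinguishing 3-colouring. -/
def c3 : Fin 3 × Fin 3 → Fin 3 :=
  fun v => ![![0, 0, 0], ![0, 1, 1], ![2, 0, 2]] v.1 v.2

/-- The neighbourhood of a vertex, as a finset. -/
def nbr (v : Fin 3 × Fin 3) : Finset (Fin 3 × Fin 3) :=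
  Finset.univ.filter (fun u => Rook.Adj v u)

/-- The colour signature of a vertex: its own colour together with the multiset of
colours of its neighbours. -/
def sig (c : Fin 3 × Fin 3 → Fin 3) (v : Fin 3 × Fin 3) : Fin 3 × Multiset (Fin 3) :=
  (c v, (nbr v).val.map c)

set_option maxRecDepth 100000 in
lemma sig_injective : ∀ v w, sig c3 v = sig c3 w → v = w := by decide

lemma nbr_map (γ : Rook ≃g Rook) (v : Fin 3 × Fin 3) :
    nbr (γ v) = (nbr v).map γ.toEquiv.toEmbedding := by
  ext u
  simp only [nbr, Finset.mem_map, Finset.mem_filter, Finset.mem_univ, true_and,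
    Equiv.coe_toEmbedding]
  constructor
  · intro h
    refine ⟨γ.symm u, ?_, by simp⟩
    have := γ.symm.map_adj_iff.mpr h
    simpa using this
  · rintro ⟨w, hw, rfl⟩
    exact γ.map_adj_iff.mpr hw

lemma sig_preserved (γ : Rook ≃g Rook) (c : Fin 3 × Fin 3 → Fin 3)
    (hc : ∀ v, c (γ v) = c v) (v : Fin 3 × Fin 3) : sig c (γ v) = sig c v := by
  unfold sig
  refine Prod.ext (hc v) ?_
  rw [nbr_map γ v]
  simp only [Finset.map_val, Multiset.map_map]
  exact Multiset.map_congr rfl fun w _ => hc w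

lemma c3_distinguishing : IsDistinguishing Rook c3 := by
  intro γ hγ v
  exact sig_injective (γ v) v (sig_preserved γ c3 hγ v)

end RookAux

theorem distinguishingNumber_rook :
    distinguishingNumber ((completeGraph (Fin 3)).boxProd (completeGraph (Fin 3))) = 3 := by
  have h3 : (3 : ℕ) ∈ {k | ∃ c : Fin 3 × Fin 3 → Fin k,
      IsDistinguishing RookAux.Rook c} := ⟨RookAux.c3, RookAux.c3_distinguishing⟩
  refine le_antisymm (Nat.sInf_le h3) ?_
  refine le_csInf ⟨3, h3⟩ ?_
  rintro k ⟨c, hc⟩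
  by_contra hk
  push_neg at hk
  have hk2 : k ≤ 2 := by omega
  set c2 : Fin 3 × Fin 3 → Fin 2 := fun v => Fin.castLE hk2 (c v) with hc2
  obtain ⟨a, b, s, ⟨v, hv⟩, hpres⟩ := RookAux.no_two_colouring c2
  apply hv
  apply hc (RookAux.autOf (RookAux.p6 a) (RookAux.p6 b) s)
  intro w
  exact Fin.castLE_injective hk2 (hpres w)
end

section
/- The Petersen graph has distinguishing number 3. -/
/-!
Every automorphism of the Petersen graph is induced by a permutation of `Fin 5`: the independent
sets of size four are exactly the stars `{s | i ∈ s}`, so an automorphism permutes the stars, and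
a vertex is the intersection of the two stars it lies in. Hence a colouring is distinguishing iff
no nontrivial permutation of `Fin 5` preserves it, read as a colouring of the edges of `K₅`.
With two colours this is a graph on five vertices, and every such graph has a nontrivial
automorphism (there are no asymmetric graphs on fewer than six vertices). With three colours,
the path `0-1-2-3-4` with its end edge `{3, 4}` in a colour of its own has no symmetry left.
-/

open SimpleGraph

/-- The Petersen graph as the Kneser graph on 2-element subsets of a 5-element set,
with two subsets adjacent iff they are disjoint. -/
def petersenGraph : SimpleGraph {s : Finset (Fin 5) // s.card = 2} where
  Adj s t := Disjoint s.val t.val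
  symm := by constructor; intro s t h; exact h.symm
  loopless := by
    constructor
    intro s h
    have h0 : s.val = ∅ := by simpa using disjoint_self.mp h
    have h2 := s.property
    rw [h0] at h2
    simp at h2

open Equiv

theorem SimpleGraph.IsNIndepSet.map_iso {α β : Type*} {G : SimpleGraph α} {H : SimpleGraph β}
    {n : ℕ} {s : Finset α} (h : G.IsNIndepSet n s) (e : G ≃g H) :
    H.IsNIndepSet n (s.map e.toEquiv.toEmbedding) := by
  refine ⟨?_, by simp [h.card_eq]⟩
  simp only [IsIndepSet, Finset.coe_map]
  rintro _ ⟨x, hx, rfl⟩ _ ⟨y, hy, rfl⟩ hne hadj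
  exact h.isIndepSet hx hy (ne_of_apply_ne e hne) (e.map_adj_iff.mp hadj)

theorem IsDistinguishing.castLE {V : Type*} {G : SimpleGraph V} {k m : ℕ} {c : V → Fin k}
    (hc : IsDistinguishing G c) (h : k ≤ m) : IsDistinguishing G (Fin.castLE h ∘ c) :=
  fun γ hγ => hc γ fun v => Fin.castLE_injective h (hγ v)

theorem distinguishingNumber_eq_succ {V : Type*} [Fintype V] {G : SimpleGraph V} {k : ℕ}
    (hk : ∃ c : V → Fin (k + 1), IsDistinguishing G c)
    (hlt : ∀ c : V → Fin k, ¬IsDistinguishing G c) :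
    distinguishingNumber G = k + 1 := by
  refine le_antisymm (Nat.sInf_le hk) (le_csInf ⟨_, hk⟩ ?_)
  rintro m ⟨c, hc⟩
  by_contra! hm
  exact hlt _ (hc.castLE (Nat.lt_succ_iff.mp hm))

theorem Finset.apply_mem_iff_of_mapsTo {α : Type*} {f : α → α} (hf : Function.Injective f)
    {s : Finset α} (h : Set.MapsTo f s s) (x : α) : f x ∈ s ↔ x ∈ s := by
  have hmap : s.map ⟨f, hf⟩ = s := Finset.map_eq_of_subset fun y hy => by
    obtain ⟨x, hx, rfl⟩ := Finset.mem_map.mp hy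
    exact h hx
  calc f x ∈ s ↔ f x ∈ s.map ⟨f, hf⟩ := by rw [hmap]
    _ ↔ x ∈ s := Finset.mem_map' _

namespace petersenGraph

local notation "V" => {s : Finset (Fin 5) // Finset.card s = 2}

instance : DecidableRel petersenGraph.Adj := fun s t =>
  inferInstanceAs (Decidable (Disjoint s.1 t.1))

def ofPerm (σ : Perm (Fin 5)) : petersenGraph ≃g petersenGraph where
  toEquiv := σ.finsetCongr.subtypeEquiv fun s => by simp
  map_rel_iff' := Finset.disjoint_map _

@[simp]
theorem coe_ofPerm_apply (σ : Perm (Fin 5)) (s : V) : (ofPerm σ s).1 = s.1.map σ.toEmbedding :=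
  rfl

def star (i : Fin 5) : Finset V := {s | i ∈ s.1}

theorem mem_star {i : Fin 5} {s : V} : s ∈ star i ↔ i ∈ s.1 := by simp [star]

theorem isNIndepSet_four_iff (S : Finset V) :
    petersenGraph.IsNIndepSet 4 S ↔ ∃ i, S = star i := by
  revert S; decide +kernel

theorem star_injective : Function.Injective star := by decide

theorem exists_eq_ofPerm (γ : petersenGraph ≃g petersenGraph) : ∃ σ, γ = ofPerm σ := by
  have hstar (i : Fin 5) : ∃ j, (star i).map γ.toEquiv.toEmbedding = star j :=
    (isNIndepSet_four_iff _).mp (((isNIndepSet_four_iff _).mpr ⟨i, rfl⟩).map_iso γ)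
  choose τ hτ using hstar
  have hτ_inj : Function.Injective τ := fun i j h =>
    star_injective (Finset.map_injective _ ((hτ i).trans (h ▸ (hτ j).symm)))
  let σ := Equiv.ofBijective τ (Finite.injective_iff_bijective.mp hτ_inj)
  refine ⟨σ, RelIso.ext fun s => Subtype.ext (Finset.ext fun j => ?_)⟩
  obtain ⟨i, rfl⟩ := σ.surjective j
  have key : τ i ∈ (γ s).1 ↔ i ∈ s.1 := by
    rw [← mem_star, ← mem_star, ← hτ i]
    exact Finset.mem_map' γ.toEquiv.toEmbedding
  simp [σ, key]

theorem exists_ofPerm_apply_ne {σ : Perm (Fin 5)} (hσ : σ ≠ 1) : ∃ s, ofPerm σ s ≠ s := by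
  obtain ⟨a, ha⟩ : ∃ a, σ a ≠ a := by
    by_contra! h
    exact hσ (Perm.ext h)
  obtain ⟨x, hxa, hxσ⟩ : ∃ x, x ≠ a ∧ x ≠ σ a := by
    have : ∀ a b : Fin 5, ∃ x, x ≠ a ∧ x ≠ b := by decide
    exact this a (σ a)
  refine ⟨⟨{a, x}, Finset.card_pair hxa.symm⟩, fun h => ?_⟩
  have hmem : σ a ∈ (ofPerm σ ⟨{a, x}, Finset.card_pair hxa.symm⟩).1 := by simp
  rw [h, Finset.mem_insert, Finset.mem_singleton] at hmem
  exact hmem.elim ha (Ne.symm hxσ)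

theorem isDistinguishing_iff {k : ℕ} (c : V → Fin k) :
    IsDistinguishing petersenGraph c ↔ ∀ σ, (∀ s, c (ofPerm σ s) = c s) → σ = 1 := by
  constructor
  · intro hc σ hσ
    by_contra hne
    obtain ⟨s, hs⟩ := exists_ofPerm_apply_ne hne
    exact hs (hc _ hσ s)
  · intro h γ hγ s
    obtain ⟨σ, rfl⟩ := exists_eq_ofPerm γ
    obtain rfl := h σ hγ
    exact Subtype.ext Finset.map_refl

def threeColouring (s : V) : Fin 3 :=
  if s.1 = {3, 4} then 2
  else if s.1 ∈ ({{0, 1}, {1, 2}, {2, 3}} : Finset (Finset (Fin 5))) then 1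
  else 0

theorem isDistinguishing_threeColouring : IsDistinguishing petersenGraph threeColouring :=
  (isDistinguishing_iff _).mpr (by decide +kernel)

theorem exists_perm_ne_one_mapsTo (S : Finset V) (hS : S.card ≤ 5) :
    ∃ σ : Perm (Fin 5), σ ≠ 1 ∧ Set.MapsTo (ofPerm σ) S S := by
  -- the 10 transpositions and the 15 products of two disjoint transpositions
  have key : ∀ T : Finset V, T.card ≤ 5 →
      (∃ a b : Fin 5, a < b ∧ ∀ s ∈ T, ofPerm (swap a b) s ∈ T) ∨
      ∃ a b c d : Fin 5, a < b ∧ c < d ∧ a < c ∧ b ≠ c ∧ b ≠ d ∧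
        ∀ s ∈ T, ofPerm (swap a b * swap c d) s ∈ T := by
    decide +kernel
  rcases key S hS with ⟨a, b, hab, h⟩ | ⟨a, b, c, d, hab, hcd, hac, -, -, h⟩
  · refine ⟨swap a b, fun h1 => hab.ne' ?_, h⟩
    simpa using DFunLike.congr_fun h1 a
  · refine ⟨swap a b * swap c d, fun h1 => hab.ne' ?_, h⟩
    simpa [swap_apply_of_ne_of_ne hac.ne (hac.trans hcd).ne] using DFunLike.congr_fun h1 a

theorem exists_perm_ne_one_preserving (c : V → Fin 2) :
    ∃ σ : Perm (Fin 5), σ ≠ 1 ∧ ∀ s, c (ofPerm σ s) = c s := by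
  have hfin : ∀ x y : Fin 2, (x = 0 ↔ y = 0) → x = y := by decide
  have hsplit := Finset.card_filter_add_card_filter_not (s := Finset.univ) (c · = 0)
  rw [show (Finset.univ : Finset V).card = 10 from rfl] at hsplit
  obtain ⟨S, hS, hSc⟩ :
      ∃ S : Finset V, S.card ≤ 5 ∧ ∀ s t, (s ∈ S ↔ t ∈ S) → c s = c t := by
    rcases le_or_gt (Finset.univ.filter (c · = 0)).card 5 with h | h
    · exact ⟨_, h, fun s t hst => hfin _ _ (by simpa using hst)⟩
    · refine ⟨Finset.univ.filter (¬c · = 0), by omega, fun s t hst => hfin _ _ ?_⟩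
      exact not_iff_not.mp (by simpa using hst)
  obtain ⟨σ, hσ, hmaps⟩ := exists_perm_ne_one_mapsTo S hS
  exact ⟨σ, hσ, fun s =>
    hSc _ _ (Finset.apply_mem_iff_of_mapsTo (ofPerm σ).injective hmaps s)⟩

theorem not_isDistinguishing_fin_two (c : V → Fin 2) : ¬IsDistinguishing petersenGraph c := by
  obtain ⟨σ, hσ, hc⟩ := exists_perm_ne_one_preserving c
  exact fun h => hσ ((isDistinguishing_iff c).mp h σ hc)

end petersenGraph

theorem distinguishingNumber_petersenGraph :
    distinguishingNumber petersenGraph = 3 :=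
  distinguishingNumber_eq_succ ⟨_, petersenGraph.isDistinguishing_threeColouring⟩
    petersenGraph.not_isDistinguishing_fin_two
end

section
/- The tensor product K_5 × K_2 has distinguishing number 3. -/
open SimpleGraph

/-- The tensor product `K_5 × K_2`: vertices `(i, a)` with `i : Fin 5`, `a : Fin 2`,
with `(i, a)` adjacent to `(j, b)` iff `i ≠ j` and `a ≠ b`. -/
def tensorK5K2 : SimpleGraph (Fin 5 × Fin 2) where
  Adj p q := p.1 ≠ q.1 ∧ p.2 ≠ q.2
  symm := by constructor; intro p q h; exact ⟨h.1.symm, h.2.symm⟩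
  loopless := by constructor; intro p h; exact h.1 rfl

/-!
Exchanging two rows `{i} × Fin 2` of `K_5 × K_2` is an automorphism. With at most two colours
there are at most four colour patterns for a row, so two rows `i ≠ j` look alike and swapping them
is a nontrivial colour-preserving automorphism. With three colours, the colouring `witnessColouring`
below separates every vertex by its own colour together with the number of neighbours of each
colour; automorphisms preserving the colouring preserve this data, hence fix every vertex.
-/

open Finset

section General

variable {V : Type*} {G : SimpleGraph V} {k : ℕ}

theorem distinguishingNumber_eq_of_isDistinguishing [Fintype V] {c : V → Fin k}
    (hc : IsDistinguishing G c) (hlt : ∀ m < k, ∀ c : V → Fin m, ¬ IsDistinguishing G c) :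
    distinguishingNumber G = k :=
  le_antisymm (Nat.sInf_le ⟨c, hc⟩) <|
    le_csInf ⟨k, c, hc⟩ fun m ⟨c', hc'⟩ => not_lt.1 fun hm => hlt m hm c' hc'

variable [Fintype V] (G) [DecidableRel G.Adj]

def colourCode (c : V → Fin k) (v : V) : Fin k × (Fin k → ℕ) :=
  (c v, fun i => #{w | G.Adj v w ∧ c w = i})

variable {G}

theorem colourCode_iso_apply {c : V → Fin k} (γ : G ≃g G) (hγ : ∀ v, c (γ v) = c v)
    (v : V) : colourCode G c (γ v) = colourCode G c v := by
  refine Prod.ext (hγ v) (funext fun i => ?_)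
  refine (Finset.card_equiv γ.toEquiv fun w => ?_).symm
  simp [γ.map_adj_iff, hγ]

theorem IsDistinguishing.of_injective_colourCode {c : V → Fin k}
    (hc : Function.Injective (colourCode G c)) : IsDistinguishing G c :=
  fun γ hγ v => hc (colourCode_iso_apply γ hγ v)

end General

instance : DecidableRel tensorK5K2.Adj :=
  fun p q => inferInstanceAs (Decidable (p.1 ≠ q.1 ∧ p.2 ≠ q.2))

/-- The rows get the pairwise distinct colour patterns `00, 01, 02, 10, 12`. -/
def witnessColouring (p : Fin 5 × Fin 2) : Fin 3 :=
  ![![0, 0, 0, 1, 1], ![0, 1, 2, 0, 2]] p.2 p.1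

theorem isDistinguishing_witnessColouring : IsDistinguishing tensorK5K2 witnessColouring :=
  IsDistinguishing.of_injective_colourCode (by unfold Function.Injective; decide)

def rowSwap (i j : Fin 5) : tensorK5K2 ≃g tensorK5K2 where
  toEquiv := (Equiv.swap i j).prodCongr (Equiv.refl _)
  map_rel_iff' := by simp [tensorK5K2]

theorem not_isDistinguishing_of_row_eq {k : ℕ} {c : Fin 5 × Fin 2 → Fin k} {i j : Fin 5} (hij : i ≠ j)
    (hc : ∀ a, c (i, a) = c (j, a)) : ¬ IsDistinguishing tensorK5K2 c := by
  intro hd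
  have hswap : ∀ p, c (rowSwap i j p) = c p := by
    rintro ⟨x, a⟩
    change c (Equiv.swap i j x, a) = c (x, a)
    rw [Equiv.swap_apply_def]
    split_ifs with hxi hxj
    · rw [hxi, hc]
    · rw [hxj, hc]
    · rfl
  have hfix := hd (rowSwap i j) hswap (i, 0)
  change (Equiv.swap i j i, (0 : Fin 2)) = (i, 0) at hfix
  rw [Equiv.swap_apply_left, Prod.mk.injEq] at hfix
  exact hij hfix.1.symm

theorem not_isDistinguishing_of_le_two {k : ℕ} (hk : k ≤ 2) (c : Fin 5 × Fin 2 → Fin k) :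
    ¬ IsDistinguishing tensorK5K2 c := by
  have hcard : Fintype.card (Fin 2 → Fin k) < Fintype.card (Fin 5) := by
    simp only [Fintype.card_fun, Fintype.card_fin]
    interval_cases k <;> norm_num
  obtain ⟨i, j, hij, hrow⟩ := Fintype.exists_ne_map_eq_of_card_lt (fun i a => c (i, a)) hcard
  exact not_isDistinguishing_of_row_eq hij (congrFun hrow)

theorem distinguishingNumber_tensorK5K2 :
    distinguishingNumber tensorK5K2 = 3 :=
  distinguishingNumber_eq_of_isDistinguishing isDistinguishing_witnessColouring
    fun _ hm => not_isDistinguishing_of_le_two (by omega)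
end

section
/- A connected vertex-transitive graph of valency r is at least ⌈2r/3⌉-vertex-connected. -/
open SimpleGraph

/-- A graph `G` is `k`-connected if it has more than `k` vertices and remains
connected after deleting any set of fewer than `k` vertices. -/
def IsKVertexConnected {V : Type*} [Fintype V] (G : SimpleGraph V) (k : ℕ) : Prop :=
  k < Fintype.card V ∧
    ∀ S : Finset V, S.card < k →
      ((⊤ : G.Subgraph).deleteVerts (S : Set V)).coe.Connected

/-- A graph is vertex-transitive if its automorphism group acts transitively on vertices. -/
def IsVertexTransitive {V : Type*} (G : SimpleGraph V) : Prop :=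
  ∀ u v : V, ∃ γ : G ≃g G, γ u = v

/-!
Following Mader and Watkins: call `C` a part if `C` and its far side `V ∖ (C ∪ N(C))` are both
nonempty, a fragment a part with `|N(C)|` equal to the least such value `κ`, and an atom a fragment
of least size `a`. Comparing `N(A ∩ F)` with `N(A)` and `N(F)` shows that an atom meeting a
fragment lies inside it, and by vertex-transitivity every vertex lies in an atom. A vertex `v` of
`N(A)` has neighbours both in the atom `A` and in its far side, so the outer neighbourhood of an
atom containing `v` holds `A` and a second atom disjoint from it: `2a ≤ κ`. With `r + 1 ≤ a + κ`
this gives `2r + 2 ≤ 3κ`, and a set whose deletion disconnects `G` contains some `N(C)`.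
-/

namespace SimpleGraph

open Finset

variable {V : Type*} [Fintype V] [DecidableEq V] (G : SimpleGraph V) [DecidableRel G.Adj]

def outerNbhd (C : Finset V) : Finset V :=
  univ.filter fun v => v ∉ C ∧ ∃ u ∈ C, G.Adj u v

def farSide (C : Finset V) : Finset V := (C ∪ G.outerNbhd C)ᶜ

def IsPart (C : Finset V) : Prop := C.Nonempty ∧ (G.farSide C).Nonempty

def IsFragment (C : Finset V) : Prop := MinimalFor G.IsPart (fun D => #(G.outerNbhd D)) C

def IsAtom (C : Finset V) : Prop := MinimalFor G.IsFragment card C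

variable {G} {C D : Finset V} {u v : V}

@[simp]
lemma mem_outerNbhd : v ∈ G.outerNbhd C ↔ v ∉ C ∧ ∃ u ∈ C, G.Adj u v := by
  simp [outerNbhd]

@[simp]
lemma mem_farSide : v ∈ G.farSide C ↔ v ∉ C ∧ v ∉ G.outerNbhd C := by
  simp [farSide]

lemma disjoint_outerNbhd : Disjoint C (G.outerNbhd C) :=
  Finset.disjoint_left.2 fun _ hv hv' => (mem_outerNbhd.1 hv').1 hv

lemma disjoint_farSide : Disjoint C (G.farSide C) :=
  Finset.disjoint_left.2 fun _ hv hv' => (mem_farSide.1 hv').1 hv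

lemma disjoint_outerNbhd_farSide : Disjoint (G.outerNbhd C) (G.farSide C) :=
  Finset.disjoint_left.2 fun _ hv hv' => (mem_farSide.1 hv').2 hv

lemma mem_or_mem_outerNbhd_or_mem_farSide (v : V) :
    v ∈ C ∨ v ∈ G.outerNbhd C ∨ v ∈ G.farSide C := by
  by_cases hC : v ∈ C
  · exact .inl hC
  by_cases hN : v ∈ G.outerNbhd C
  · exact .inr (.inl hN)
  · exact .inr (.inr (mem_farSide.2 ⟨hC, hN⟩))

lemma mem_or_mem_outerNbhd_of_adj (hu : u ∈ C) (h : G.Adj u v) : v ∈ C ∨ v ∈ G.outerNbhd C := by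
  by_cases hv : v ∈ C
  · exact .inl hv
  · exact .inr (mem_outerNbhd.2 ⟨hv, u, hu, h⟩)

lemma not_adj_of_mem_farSide (hu : u ∈ C) (hv : v ∈ G.farSide C) : ¬G.Adj u v := fun h =>
  (mem_or_mem_outerNbhd_of_adj hu h).elim (mem_farSide.1 hv).1 (mem_farSide.1 hv).2

lemma card_eq_card_inter_add_card_inter_outerNbhd_add_card_inter_farSide (T C : Finset V) :
    #T = #(T ∩ C) + #(T ∩ G.outerNbhd C) + #(T ∩ G.farSide C) := by
  rw [← card_inter_add_card_sdiff T (C ∪ G.outerNbhd C), inter_union_distrib_left,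
    card_union_of_disjoint (disjoint_outerNbhd.mono inter_subset_right inter_subset_right),
    sdiff_eq_inter_compl, farSide]

lemma farSide_anti (h : C ⊆ D) : G.farSide D ⊆ G.farSide C := by
  intro w hw
  rw [mem_farSide] at hw ⊢
  refine ⟨fun hwC => hw.1 (h hwC), fun hwN => ?_⟩
  obtain ⟨hwC, u, hu, hadj⟩ := mem_outerNbhd.1 hwN
  exact (mem_or_mem_outerNbhd_of_adj (h hu) hadj).elim hw.1 hw.2

lemma outerNbhd_farSide_subset (C : Finset V) : G.outerNbhd (G.farSide C) ⊆ G.outerNbhd C := by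
  intro v hv
  obtain ⟨hv', u, hu, hadj⟩ := mem_outerNbhd.1 hv
  rcases mem_or_mem_outerNbhd_or_mem_farSide (C := C) (G := G) v with h | h | h
  · exact absurd hadj.symm (not_adj_of_mem_farSide h hu)
  · exact h
  · exact absurd h hv'

lemma subset_farSide_farSide (C : Finset V) : C ⊆ G.farSide (G.farSide C) := by
  intro u hu
  refine mem_farSide.2 ⟨Finset.disjoint_left.1 disjoint_farSide hu, fun h => ?_⟩
  obtain ⟨-, w, hw, hadj⟩ := mem_outerNbhd.1 h
  exact not_adj_of_mem_farSide hu hw hadj.symm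

variable {A F : Finset V}

lemma card_outerNbhd_inter_le (A F : Finset V) :
    #(G.outerNbhd (A ∩ F)) ≤
      #(A ∩ G.outerNbhd F) + #(G.outerNbhd A ∩ G.outerNbhd F) + #(G.outerNbhd A ∩ F) := by
  have hsub : G.outerNbhd (A ∩ F) ⊆
      A ∩ G.outerNbhd F ∪ G.outerNbhd A ∩ G.outerNbhd F ∪ G.outerNbhd A ∩ F := by
    intro v hv
    obtain ⟨hv, u, hu, hadj⟩ := mem_outerNbhd.1 hv
    rw [mem_inter] at hu hv
    simp only [mem_union, mem_inter]
    rcases mem_or_mem_outerNbhd_of_adj hu.1 hadj with hA | hA <;>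
      rcases mem_or_mem_outerNbhd_of_adj hu.2 hadj with hF | hF <;> tauto
  calc #(G.outerNbhd (A ∩ F))
      _ ≤ #(A ∩ G.outerNbhd F ∪ G.outerNbhd A ∩ G.outerNbhd F ∪ G.outerNbhd A ∩ F) :=
        card_le_card hsub
      _ ≤ _ := (card_union_le _ _).trans (Nat.add_le_add_right (card_union_le _ _) _)

lemma IsPart.farSide (hC : G.IsPart C) : G.IsPart (G.farSide C) :=
  ⟨hC.2, hC.1.mono (subset_farSide_farSide C)⟩

lemma IsPart.inter (hA : G.IsPart A) (hAF : (A ∩ F).Nonempty) : G.IsPart (A ∩ F) :=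
  ⟨hAF, hA.2.mono (farSide_anti inter_subset_left)⟩

lemma IsFragment.card_outerNbhd_le (hC : G.IsFragment C) (hD : G.IsPart D) :
    #(G.outerNbhd C) ≤ #(G.outerNbhd D) :=
  MinimalFor.le (f := fun D => #(G.outerNbhd D)) hC hD

lemma IsFragment.of_card_outerNbhd_le (hC : G.IsFragment C) (hD : G.IsPart D)
    (h : #(G.outerNbhd D) ≤ #(G.outerNbhd C)) : G.IsFragment D :=
  ⟨hD, fun _ hE _ => h.trans (hC.card_outerNbhd_le hE)⟩

lemma IsFragment.outerNbhd_farSide (hC : G.IsFragment C) :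
    G.outerNbhd (G.farSide C) = G.outerNbhd C :=
  eq_of_subset_of_card_le (outerNbhd_farSide_subset C) (hC.card_outerNbhd_le hC.1.farSide)

lemma IsFragment.farSide (hC : G.IsFragment C) : G.IsFragment (G.farSide C) :=
  hC.of_card_outerNbhd_le hC.1.farSide (congrArg card hC.outerNbhd_farSide).le

lemma IsFragment.farSide_farSide (hC : G.IsFragment C) : G.farSide (G.farSide C) = C := by
  refine Subset.antisymm (fun v hv => ?_) (subset_farSide_farSide C)
  rw [mem_farSide, hC.outerNbhd_farSide] at hv
  rcases mem_or_mem_outerNbhd_or_mem_farSide (G := G) (C := C) v with h | h | h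
  exacts [h, absurd h hv.2, absurd h hv.1]

lemma IsFragment.card_outerNbhd_inter_farSide_le (hA : G.IsFragment A) (hAF : (A ∩ F).Nonempty) :
    #(G.outerNbhd A ∩ G.farSide F) ≤ #(A ∩ G.outerNbhd F) := by
  have hmin := hA.card_outerNbhd_le (hA.1.inter hAF)
  have hcross := card_outerNbhd_inter_le (G := G) A F
  have hsplit := card_eq_card_inter_add_card_inter_outerNbhd_add_card_inter_farSide
    (G := G) (G.outerNbhd A) F
  omega

lemma IsAtom.card_le (hA : G.IsAtom A) (hF : G.IsFragment F) : #A ≤ #F :=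
  MinimalFor.le hA hF

lemma IsAtom.subset_of_inter_nonempty (hA : G.IsAtom A) (hF : G.IsFragment F)
    (hAF : (A ∩ F).Nonempty) : A ⊆ F := by
  have hsplitA := card_eq_card_inter_add_card_inter_outerNbhd_add_card_inter_farSide (G := G) A F
  have hcrossA := hA.1.card_outerNbhd_inter_farSide_le hAF
  -- Either the far sides meet, and the crossing inequality for them makes `A ∩ F` a fragment,
  -- or `G.farSide F` is a fragment smaller than `A`.
  by_cases hfar : (G.farSide F ∩ G.farSide A).Nonempty
  · have hcrossF := hF.farSide.card_outerNbhd_inter_farSide_le hfar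
    rw [hF.outerNbhd_farSide, hA.1.farSide_farSide, hA.1.outerNbhd_farSide, inter_comm,
      inter_comm (G.farSide F)] at hcrossF
    have hfrag : G.IsFragment (A ∩ F) := by
      refine hA.1.of_card_outerNbhd_le (hA.1.1.inter hAF) ?_
      have := card_outerNbhd_inter_le (G := G) A F
      have := card_eq_card_inter_add_card_inter_outerNbhd_add_card_inter_farSide
        (G := G) (G.outerNbhd A) F
      omega
    rw [← eq_of_subset_of_card_le inter_subset_left (hA.card_le hfrag)]
    exact inter_subset_right
  · have hsplitF := card_eq_card_inter_add_card_inter_outerNbhd_add_card_inter_farSide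
      (G := G) (G.farSide F) A
    rw [not_nonempty_iff_eq_empty.1 hfar, card_empty, inter_comm, inter_comm (G.farSide F)]
      at hsplitF
    have := hA.card_le hF.farSide
    have := hAF.card_pos
    omega

lemma IsAtom.subset_outerNbhd (hA : G.IsAtom A) (hF : G.IsFragment F) (hu : u ∈ A)
    (huF : u ∈ G.outerNbhd F) : A ⊆ G.outerNbhd F := by
  intro v hv
  rcases mem_or_mem_outerNbhd_or_mem_farSide (G := G) (C := F) v with h | h | h
  · have := hA.subset_of_inter_nonempty hF ⟨v, mem_inter.2 ⟨hv, h⟩⟩ hu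
    exact absurd huF (Finset.disjoint_left.1 disjoint_outerNbhd this)
  · exact h
  · have := hA.subset_of_inter_nonempty hF.farSide ⟨v, mem_inter.2 ⟨hv, h⟩⟩ hu
    exact absurd this (Finset.disjoint_left.1 disjoint_outerNbhd_farSide huF)

lemma exists_isAtom (hP : ∃ C, G.IsPart C) : ∃ A, G.IsAtom A := by
  obtain ⟨F, hF⟩ := exists_minimalFor_of_wellFoundedLT _ (fun C => #(G.outerNbhd C)) hP
  exact exists_minimalFor_of_wellFoundedLT _ card ⟨F, hF⟩

section Iso

variable {W : Type*} [Fintype W] [DecidableEq W] {H : SimpleGraph W} [DecidableRel H.Adj]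

lemma outerNbhd_image (γ : G ≃g H) (C : Finset V) :
    H.outerNbhd (C.image γ) = (G.outerNbhd C).image γ := by
  ext v
  obtain ⟨w, rfl⟩ := γ.surjective v
  simp [γ.injective.mem_finset_image, Iso.map_adj_iff]

lemma farSide_image (γ : G ≃g H) (C : Finset V) :
    H.farSide (C.image γ) = (G.farSide C).image γ := by
  ext v
  obtain ⟨w, rfl⟩ := γ.surjective v
  simp [γ.injective.mem_finset_image, outerNbhd_image]

lemma card_outerNbhd_image (γ : G ≃g H) (C : Finset V) :
    #(H.outerNbhd (C.image γ)) = #(G.outerNbhd C) := by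
  rw [outerNbhd_image, card_image_of_injective _ γ.injective]

lemma IsPart.image (γ : G ≃g H) (hC : G.IsPart C) : H.IsPart (C.image γ) :=
  ⟨hC.1.image γ, by rw [farSide_image]; exact hC.2.image γ⟩

lemma IsFragment.image (γ : G ≃g H) (hC : G.IsFragment C) : H.IsFragment (C.image γ) := by
  refine ⟨hC.1.image γ, fun D hD _ => ?_⟩
  dsimp only
  rw [card_outerNbhd_image, ← card_outerNbhd_image γ.symm D]
  exact hC.card_outerNbhd_le (hD.image γ.symm)

lemma IsAtom.image (γ : G ≃g H) (hC : G.IsAtom C) : H.IsAtom (C.image γ) := by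
  refine ⟨hC.1.image γ, fun D hD _ => ?_⟩
  rw [card_image_of_injective _ γ.injective, ← card_image_of_injective D γ.symm.injective]
  exact hC.card_le (hD.image γ.symm)

end Iso

lemma exists_isAtom_mem (htrans : IsVertexTransitive G) (hP : ∃ C, G.IsPart C) (v : V) :
    ∃ A, G.IsAtom A ∧ v ∈ A := by
  obtain ⟨A, hA⟩ := exists_isAtom hP
  obtain ⟨a, ha⟩ := hA.1.1.1
  obtain ⟨γ, rfl⟩ := htrans a v
  exact ⟨A.image γ, hA.image γ, mem_image_of_mem γ ha⟩

lemma degree_add_one_le (hv : v ∈ C) : G.degree v + 1 ≤ #C + #(G.outerNbhd C) := by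
  have hsub : insert v (G.neighborFinset v) ⊆ C ∪ G.outerNbhd C := by
    refine insert_subset (mem_union_left _ hv) fun w hw => ?_
    exact mem_union.2 (mem_or_mem_outerNbhd_of_adj hv ((G.mem_neighborFinset v w).1 hw))
  calc G.degree v + 1 = #(insert v (G.neighborFinset v)) := by
        rw [card_insert_of_notMem (G.notMem_neighborFinset_self v), card_neighborFinset_eq_degree]
    _ ≤ #(C ∪ G.outerNbhd C) := card_le_card hsub
    _ = #C + #(G.outerNbhd C) := card_union_of_disjoint disjoint_outerNbhd

lemma Connected.outerNbhd_nonempty (hconn : G.Connected) (hC : G.IsPart C) :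
    (G.outerNbhd C).Nonempty := by
  obtain ⟨c, hc⟩ := hC.1
  obtain ⟨c', hc'⟩ := hC.2
  obtain ⟨d, -, hd, hd'⟩ :=
    (hconn c c').some.exists_boundary_dart (C : Set V) hc (mem_farSide.1 hc').1
  exact ⟨d.snd, mem_outerNbhd.2 ⟨hd', d.fst, hd, d.adj⟩⟩

lemma IsAtom.two_mul_card_le (hconn : G.Connected) (htrans : IsVertexTransitive G)
    (hA : G.IsAtom A) : 2 * #A ≤ #(G.outerNbhd A) := by
  have hP : ∃ C, G.IsPart C := ⟨A, hA.1.1⟩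
  obtain ⟨v, hv⟩ := hconn.outerNbhd_nonempty hA.1.1
  obtain ⟨B, hB, hvB⟩ := exists_isAtom_mem htrans hP v
  obtain ⟨hvA, u, hu, huv⟩ := mem_outerNbhd.1 hv
  obtain ⟨hvA', u', hu', hu'v⟩ := mem_outerNbhd.1 (hA.1.outerNbhd_farSide ▸ hv)
  have huB : u ∈ G.outerNbhd B := by
    refine mem_outerNbhd.2 ⟨fun h => hvA ?_, v, hvB, huv.symm⟩
    exact hB.subset_of_inter_nonempty hA.1 ⟨u, mem_inter.2 ⟨h, hu⟩⟩ hvB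
  have hu'B : u' ∈ G.outerNbhd B := by
    refine mem_outerNbhd.2 ⟨fun h => hvA' ?_, v, hvB, hu'v.symm⟩
    exact hB.subset_of_inter_nonempty hA.1.farSide ⟨u', mem_inter.2 ⟨h, hu'⟩⟩ hvB
  obtain ⟨A', hA', hu'A'⟩ := exists_isAtom_mem htrans hP u'
  have hdisj : Disjoint A A' := disjoint_farSide.mono_right <|
    hA'.subset_of_inter_nonempty hA.1.farSide ⟨u', mem_inter.2 ⟨hu'A', hu'⟩⟩
  calc 2 * #A = #A + #A' := by rw [two_mul, (hA.card_le hA'.1).antisymm (hA'.card_le hA.1)]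
    _ = #(A ∪ A') := (card_union_of_disjoint hdisj).symm
    _ ≤ #(G.outerNbhd B) := card_le_card <|
      union_subset (hA.subset_outerNbhd hB.1 hu huB) (hA'.subset_outerNbhd hB.1 hu'A' hu'B)
    _ = #(G.outerNbhd A) :=
      (hB.1.card_outerNbhd_le hA.1.1).antisymm (hA.1.card_outerNbhd_le hB.1.1)

lemma IsPart.two_mul_add_two_le_three_mul_card_outerNbhd {r : ℕ} (hconn : G.Connected)
    (htrans : IsVertexTransitive G) (hreg : G.IsRegularOfDegree r) (hC : G.IsPart C) :
    2 * r + 2 ≤ 3 * #(G.outerNbhd C) := by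
  obtain ⟨A, hA⟩ := exists_isAtom ⟨C, hC⟩
  obtain ⟨a, ha⟩ := hA.1.1.1
  have hdeg := degree_add_one_le (G := G) ha
  have hatom := hA.two_mul_card_le hconn htrans
  have hmin := hA.1.card_outerNbhd_le hC
  rw [hreg a] at hdeg
  omega

lemma connected_deleteVerts_of_forall_not_subset {S : Finset V} (hS : Sᶜ.Nonempty)
    (h : ∀ C, G.IsPart C → ¬G.outerNbhd C ⊆ S) :
    ((⊤ : G.Subgraph).deleteVerts (S : Set V)).coe.Connected := by
  classical
  set H := ((⊤ : G.Subgraph).deleteVerts (S : Set V)).coe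
  have hverts : ∀ v, v ∈ ((⊤ : G.Subgraph).deleteVerts (S : Set V)).verts ↔ v ∉ S := by simp
  obtain ⟨s, hs⟩ := hS
  refine (connected_iff _).2 ⟨fun x y => ?_, ⟨⟨s, (hverts s).2 (mem_compl.1 hs)⟩⟩⟩
  by_contra hxy
  let C : Finset V := univ.filter fun v => ∃ hv : v ∉ S, H.Reachable x ⟨v, (hverts v).2 hv⟩
  have hCS : G.outerNbhd C ⊆ S := by
    intro w hw
    by_contra hwS
    obtain ⟨hwC, u, hu, huw⟩ := mem_outerNbhd.1 hw
    obtain ⟨huS, hxu⟩ := (mem_filter.1 hu).2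
    have hadj : H.Adj ⟨u, (hverts u).2 huS⟩ ⟨w, (hverts w).2 hwS⟩ := by simp [H, huS, hwS, huw]
    exact hwC (mem_filter.2 ⟨mem_univ w, hwS, hxu.trans hadj.reachable⟩)
  refine h C ⟨⟨x, ?_⟩, ⟨y, ?_⟩⟩ hCS
  · exact mem_filter.2 ⟨mem_univ _, (hverts x).1 x.2, .refl _⟩
  · have hyC : (y : V) ∉ C := fun hy => hxy (mem_filter.1 hy).2.2
    exact mem_farSide.2 ⟨hyC, fun hyN => (hverts y).1 y.2 (hCS hyN)⟩

end SimpleGraph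

theorem vertexTransitive_connectivity {V : Type*} [Fintype V] (G : SimpleGraph V) [DecidableRel G.Adj] (r : ℕ)
    (hconn : G.Connected) (htrans : IsVertexTransitive G)
    (hreg : G.IsRegularOfDegree r) :
    IsKVertexConnected G ((2 * r + 2) / 3) := by
  classical
  obtain ⟨v⟩ := hconn.nonempty
  have hr : r < Fintype.card V := hreg v ▸ G.degree_lt_card_verts v
  refine ⟨by omega, fun S hS => connected_deleteVerts_of_forall_not_subset ?_ fun C hC hCS => ?_⟩
  · rw [← Finset.card_pos, Finset.card_compl]
    omega
  · have := Finset.card_le_card hCS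
    have := hC.two_mul_add_two_le_three_mul_card_outerNbhd hconn htrans hreg
    omega
end

section
/- If G is a connected graph on at least 5 vertices, then the automorphism group of the line graph L(G) is permutationally equivalent to the automorphism group of G acting naturally on the edge set of G. -/
/-!
Three pairwise intersecting edges of `G` either share a vertex or form a triangle, and both give a
triangle of `L(G)`. Parity tells them apart: every edge meets an even number of sides of a
triangle, whereas in a connected graph on at least five vertices an edge leaving the four vertices
of a claw meets exactly one or all three of its edges. Hence an automorphism `ψ` of `L(G)` maps the
edges at a vertex of degree at least two onto the edges at some vertex; the star of a leaf is
recovered through its neighbour. Distinct vertices of a connected graph on at least three vertices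
have distinct stars, so this defines a bijection of `V`, which is an automorphism inducing `ψ`.
-/

namespace SimpleGraph

variable {V W : Type*} {G : SimpleGraph V}

theorem Connected.exists_adj_of_mem_of_notMem (hG : G.Connected) {S : Set V} {x y : V}
    (hx : x ∈ S) (hy : y ∉ S) : ∃ p ∈ S, ∃ q ∉ S, G.Adj p q := by
  obtain ⟨d, -, hd₁, hd₂⟩ := (hG.preconnected x y).some.exists_boundary_dart S hx hy
  exact ⟨_, hd₁, _, hd₂, d.adj⟩

theorem Connected.exists_adj_of_card_lt [Fintype V] (hG : G.Connected) {s : Finset V}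
    (hs : s.card < Fintype.card V) {x : V} (hx : x ∈ s) : ∃ p ∈ s, ∃ q ∉ s, G.Adj p q := by
  obtain ⟨y, -, hy⟩ := Finset.exists_mem_notMem_of_card_lt_card (t := Finset.univ) hs
  exact hG.exists_adj_of_mem_of_notMem (S := s) hx hy

theorem Connected.eq_of_forall_mem_edge_iff [Fintype V] (hG : G.Connected)
    (hcard : 3 ≤ Fintype.card V) {a b : V}
    (h : ∀ e : G.edgeSet, a ∈ (e : Sym2 V) ↔ b ∈ (e : Sym2 V)) : a = b := by
  classical
  by_contra hab
  obtain ⟨p, hp, q, hq, hpq⟩ := hG.exists_adj_of_card_lt (s := {a, b})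
    (Finset.card_le_two.trans_lt (by omega)) (Finset.mem_insert_self a _)
  have hpq_mem := h ⟨s(p, q), hpq⟩
  simp only [Finset.mem_insert, Finset.mem_singleton] at hp hq
  simp only [Sym2.mem_iff] at hpq_mem
  grind

theorem Connected.exists_ne_mem_of_forall_mem_eq [Fintype V] (hG : G.Connected)
    (hcard : 3 ≤ Fintype.card V) {u v : V}
    (hv : ∀ e : G.edgeSet, v ∈ (e : Sym2 V) → (e : Sym2 V) = s(v, u)) :
    ∃ f : G.edgeSet, (f : Sym2 V) ≠ s(v, u) ∧ u ∈ (f : Sym2 V) := by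
  classical
  obtain ⟨p, hp, q, hq, hpq⟩ := hG.exists_adj_of_card_lt (s := {v, u})
    (Finset.card_le_two.trans_lt (by omega)) (Finset.mem_insert_self v _)
  have hpq_eq := hv ⟨s(p, q), hpq⟩
  simp only [Finset.mem_insert, Finset.mem_singleton] at hp hq
  refine ⟨⟨s(p, q), hpq⟩, ?_⟩
  simp only [Sym2.mem_iff, Sym2.eq_iff] at hpq_eq ⊢
  grind

def OddAdj (H : SimpleGraph W) (f a b c : W) : Prop :=
  Xor (Xor (H.Adj f a) (H.Adj f b)) (H.Adj f c)

theorem Iso.oddAdj_iff {W' : Type*} {H : SimpleGraph W} {H' : SimpleGraph W'} (φ : H ≃g H')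
    {f a b c : W} : H'.OddAdj (φ f) (φ a) (φ b) (φ c) ↔ H.OddAdj f a b c := by
  simp only [OddAdj, φ.map_adj_iff]

theorem lineGraph_adj_mk {x y a b : V} (hxy : s(x, y) ∈ G.edgeSet)
    (hab : s(a, b) ∈ G.edgeSet) :
    G.lineGraph.Adj ⟨s(x, y), hxy⟩ ⟨s(a, b), hab⟩ ↔
      s(x, y) ≠ s(a, b) ∧ (x = a ∨ x = b ∨ y = a ∨ y = b) := by
  rw [lineGraph_adj_iff_exists]
  simp only [ne_eq, Subtype.ext_iff, Sym2.mem_iff, or_and_right, exists_or, exists_eq_left,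
    or_assoc]

theorem not_oddAdj_lineGraph_triangle {a b c : V} (hab : s(a, b) ∈ G.edgeSet)
    (hac : s(a, c) ∈ G.edgeSet) (hbc : s(b, c) ∈ G.edgeSet) (f : G.edgeSet) :
    ¬G.lineGraph.OddAdj f ⟨s(a, b), hab⟩ ⟨s(a, c), hac⟩ ⟨s(b, c), hbc⟩ := by
  obtain ⟨f, hf⟩ := f
  induction f using Sym2.ind with | _ x y => ?_
  have : x ≠ y := G.ne_of_adj hf
  have : a ≠ b := G.ne_of_adj hab
  have : a ≠ c := G.ne_of_adj hac
  have : b ≠ c := G.ne_of_adj hbc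
  simp only [OddAdj, Xor, lineGraph_adj_mk, ne_eq, Sym2.eq_iff]
  grind (splits := 30)

theorem Connected.exists_oddAdj_lineGraph_star [Fintype V] (hG : G.Connected)
    (hcard : 5 ≤ Fintype.card V) {v a b c : V} (ha : s(v, a) ∈ G.edgeSet)
    (hb : s(v, b) ∈ G.edgeSet) (hc : s(v, c) ∈ G.edgeSet) (hab : a ≠ b) (hac : a ≠ c)
    (hbc : b ≠ c) :
    ∃ f, G.lineGraph.OddAdj f ⟨s(v, a), ha⟩ ⟨s(v, b), hb⟩ ⟨s(v, c), hc⟩ := by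
  classical
  obtain ⟨p, hp, q, hq, hpq⟩ := hG.exists_adj_of_card_lt (s := {v, a, b, c})
    (Finset.card_le_four.trans_lt (by omega)) (Finset.mem_insert_self v _)
  refine ⟨⟨s(p, q), G.mem_edgeSet.2 hpq⟩, ?_⟩
  simp only [Finset.mem_insert, Finset.mem_singleton] at hp hq
  have := G.ne_of_adj ha; have := G.ne_of_adj hb; have := G.ne_of_adj hc
  simp only [OddAdj, Xor, lineGraph_adj_mk, ne_eq, Sym2.eq_iff]
  grind

theorem Connected.exists_oddAdj_lineGraph_of_common_mem [Fintype V] (hG : G.Connected)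
    (hcard : 5 ≤ Fintype.card V) {e₁ e₂ e₃ : G.edgeSet} (h₁₂ : e₁ ≠ e₂) (h₁₃ : e₁ ≠ e₃)
    (h₂₃ : e₂ ≠ e₃) {v : V} (h₁ : v ∈ (e₁ : Sym2 V)) (h₂ : v ∈ (e₂ : Sym2 V))
    (h₃ : v ∈ (e₃ : Sym2 V)) : ∃ f, G.lineGraph.OddAdj f e₁ e₂ e₃ := by
  obtain ⟨e₁, he₁⟩ := e₁
  obtain ⟨e₂, he₂⟩ := e₂
  obtain ⟨e₃, he₃⟩ := e₃
  obtain ⟨a, rfl⟩ := Sym2.mem_iff_exists.1 h₁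
  obtain ⟨b, rfl⟩ := Sym2.mem_iff_exists.1 h₂
  obtain ⟨c, rfl⟩ := Sym2.mem_iff_exists.1 h₃
  refine hG.exists_oddAdj_lineGraph_star hcard he₁ he₂ he₃ ?_ ?_ ?_ <;> rintro rfl
  exacts [h₁₂ rfl, h₁₃ rfl, h₂₃ rfl]

theorem exists_mem_of_oddAdj_lineGraph {e₁ e₂ e₃ f : G.edgeSet} (h₁₂ : G.lineGraph.Adj e₁ e₂)
    (h₁₃ : G.lineGraph.Adj e₁ e₃) (h₂₃ : G.lineGraph.Adj e₂ e₃)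
    (hf : G.lineGraph.OddAdj f e₁ e₂ e₃) :
    ∃ v, v ∈ (e₁ : Sym2 V) ∧ v ∈ (e₂ : Sym2 V) ∧ v ∈ (e₃ : Sym2 V) := by
  by_contra! hcommon
  obtain ⟨-, a, ha₁, ha₂⟩ := lineGraph_adj_iff_exists.1 h₁₂
  obtain ⟨-, b, hb₁, hb₃⟩ := lineGraph_adj_iff_exists.1 h₁₃
  obtain ⟨-, c, hc₂, hc₃⟩ := lineGraph_adj_iff_exists.1 h₂₃
  have hab : a ≠ b := by rintro rfl; exact hcommon a ha₁ ha₂ hb₃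
  have hac : a ≠ c := by rintro rfl; exact hcommon a ha₁ ha₂ hc₃
  have hbc : b ≠ c := by rintro rfl; exact hcommon b hb₁ hc₂ hb₃
  obtain ⟨e₁, he₁⟩ := e₁
  obtain ⟨e₂, he₂⟩ := e₂
  obtain ⟨e₃, he₃⟩ := e₃
  obtain rfl := (Sym2.mem_and_mem_iff hab).1 ⟨ha₁, hb₁⟩
  obtain rfl := (Sym2.mem_and_mem_iff hac).1 ⟨ha₂, hc₂⟩
  obtain rfl := (Sym2.mem_and_mem_iff hbc).1 ⟨hb₃, hc₃⟩
  exact not_oddAdj_lineGraph_triangle he₁ he₂ he₃ f hf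

theorem Connected.exists_mem_lineGraphIso_apply {H : SimpleGraph W} [Fintype V]
    (hG : G.Connected) (hcard : 5 ≤ Fintype.card V) (ψ : G.lineGraph ≃g H.lineGraph)
    {e₁ e₂ e₃ : G.edgeSet} (h₁₂ : e₁ ≠ e₂) (h₁₃ : e₁ ≠ e₃) (h₂₃ : e₂ ≠ e₃) {v : V}
    (h₁ : v ∈ (e₁ : Sym2 V)) (h₂ : v ∈ (e₂ : Sym2 V)) (h₃ : v ∈ (e₃ : Sym2 V)) :
    ∃ w, w ∈ (ψ e₁ : Sym2 W) ∧ w ∈ (ψ e₂ : Sym2 W) ∧ w ∈ (ψ e₃ : Sym2 W) := by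
  obtain ⟨f, hf⟩ := hG.exists_oddAdj_lineGraph_of_common_mem hcard h₁₂ h₁₃ h₂₃ h₁ h₂ h₃
  have adj {e e' : G.edgeSet} (hne : e ≠ e') (he : v ∈ (e : Sym2 V)) (he' : v ∈ (e' : Sym2 V)) :
      H.lineGraph.Adj (ψ e) (ψ e') :=
    ψ.map_adj_iff.2 (lineGraph_adj_iff_exists.2 ⟨hne, v, he, he'⟩)
  exact exists_mem_of_oddAdj_lineGraph (adj h₁₂ h₁ h₂) (adj h₁₃ h₁ h₃) (adj h₂₃ h₂ h₃)
    (ψ.oddAdj_iff.2 hf)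

theorem Connected.mem_lineGraphIso_apply {H : SimpleGraph W} [Fintype V]
    (hG : G.Connected) (hcard : 5 ≤ Fintype.card V) (ψ : G.lineGraph ≃g H.lineGraph)
    {e₁ e₂ e : G.edgeSet} (hne : e₁ ≠ e₂) {v : V} {w : W} (h₁ : v ∈ (e₁ : Sym2 V))
    (h₂ : v ∈ (e₂ : Sym2 V)) (hw₁ : w ∈ (ψ e₁ : Sym2 W)) (hw₂ : w ∈ (ψ e₂ : Sym2 W))
    (he : v ∈ (e : Sym2 V)) : w ∈ (ψ e : Sym2 W) := by
  by_cases he₁ : e = e₁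
  · exact he₁ ▸ hw₁
  by_cases he₂ : e = e₂
  · exact he₂ ▸ hw₂
  obtain ⟨x, hx₁, hx₂, hx⟩ :=
    hG.exists_mem_lineGraphIso_apply hcard ψ hne (Ne.symm he₁) (Ne.symm he₂) h₁ h₂ he
  obtain rfl : x = w := by
    by_contra hxw
    exact hne (ψ.injective (Subtype.ext (Sym2.eq_of_ne_mem hxw hx₁ hw₁ hx₂ hw₂)))
  exact hx

def MapsStar {H : SimpleGraph W} (ψ : G.lineGraph ≃g H.lineGraph) (v : V) (w : W) : Prop :=
  ∀ e : G.edgeSet, v ∈ (e : Sym2 V) ↔ w ∈ (ψ e : Sym2 W)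

section MapsStar

variable {H : SimpleGraph W} {ψ : G.lineGraph ≃g H.lineGraph}

theorem mapsStar_symm_iff {v : V} {w : W} : MapsStar ψ.symm w v ↔ MapsStar ψ v w := by
  refine ⟨fun h e => ?_, fun h E => ?_⟩
  · simpa using (h (ψ e)).symm
  · simpa using (h (ψ.symm E)).symm

theorem MapsStar.left_unique [Fintype V] (hG : G.Connected) (hcard : 3 ≤ Fintype.card V)
    {v v' : V} {w : W} (hv : MapsStar ψ v w) (hv' : MapsStar ψ v' w) : v = v' :=
  hG.eq_of_forall_mem_edge_iff hcard fun e => (hv e).trans (hv' e).symm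

theorem MapsStar.right_unique [Fintype W] (hH : H.Connected) (hcard : 3 ≤ Fintype.card W)
    {v : V} {w w' : W} (hw : MapsStar ψ v w) (hw' : MapsStar ψ v w') : w = w' :=
  (mapsStar_symm_iff.2 hw).left_unique hH hcard (mapsStar_symm_iff.2 hw')

theorem MapsStar.coe_apply_eq_map {γ : V → W} (hγ : ∀ v, MapsStar ψ v (γ v))
    (hinj : Function.Injective γ) (e : G.edgeSet) : (ψ e : Sym2 W) = (e : Sym2 V).map γ := by
  obtain ⟨e, he⟩ := e
  induction e using Sym2.ind with | _ x y => ?_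
  rw [Sym2.map_mk, ← Sym2.mem_and_mem_iff (hinj.ne (G.ne_of_adj he))]
  exact ⟨(hγ x _).1 (Sym2.mem_mk_left x y), (hγ y _).1 (Sym2.mem_mk_right x y)⟩

theorem MapsStar.adj_iff {γ : V → W} (hγ : ∀ v, MapsStar ψ v (γ v))
    (hinj : Function.Injective γ) {a b : V} : H.Adj (γ a) (γ b) ↔ G.Adj a b := by
  refine ⟨fun h => ?_, fun h => ?_⟩
  · set e := ψ.symm ⟨s(γ a, γ b), h⟩
    have ha : a ∈ (e : Sym2 V) := (hγ a e).2 (by simp [e])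
    have hb : b ∈ (e : Sym2 V) := (hγ b e).2 (by simp [e])
    rw [← G.mem_edgeSet, ← (Sym2.mem_and_mem_iff (hinj.ne_iff.1 h.ne)).1 ⟨ha, hb⟩]
    exact e.2
  · have := (ψ ⟨s(a, b), h⟩).2
    rwa [MapsStar.coe_apply_eq_map hγ hinj, Sym2.map_mk, mem_edgeSet] at this

theorem mapsStar_of_apply_eq_mapEdgeSet {γ : G ≃g H}
    (h : ∀ e : G.edgeSet, ψ e = γ.mapEdgeSet e) (v : V) : MapsStar ψ v (γ v) := by
  intro e
  rw [h e]
  show v ∈ (e : Sym2 V) ↔ γ v ∈ (e : Sym2 V).map γ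
  simp [γ.injective.eq_iff]

end MapsStar

theorem Connected.exists_mapsStar_of_mem_of_mem [Fintype V] (hG : G.Connected)
    (hcard : 5 ≤ Fintype.card V) (ψ : G.lineGraph ≃g G.lineGraph) {v : V} {e₁ e₂ : G.edgeSet}
    (hne : e₁ ≠ e₂) (h₁ : v ∈ (e₁ : Sym2 V)) (h₂ : v ∈ (e₂ : Sym2 V)) : ∃ w, MapsStar ψ v w := by
  obtain ⟨-, w, hw₁, hw₂⟩ :=
    lineGraph_adj_iff_exists.1 (ψ.map_adj_iff.2 (lineGraph_adj_iff_exists.2 ⟨hne, v, h₁, h₂⟩))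
  refine ⟨w, fun e => ⟨hG.mem_lineGraphIso_apply hcard ψ hne h₁ h₂ hw₁ hw₂, fun he => ?_⟩⟩
  simpa using hG.mem_lineGraphIso_apply hcard ψ.symm (ψ.injective.ne hne) hw₁ hw₂
    (by simpa using h₁) (by simpa using h₂) he

theorem Connected.exists_mapsStar_of_forall_mem_eq [Fintype V] (hG : G.Connected)
    (hcard : 5 ≤ Fintype.card V) (ψ : G.lineGraph ≃g G.lineGraph) {v u : V}
    (hvu : s(v, u) ∈ G.edgeSet)
    (hleaf : ∀ e : G.edgeSet, v ∈ (e : Sym2 V) → (e : Sym2 V) = s(v, u)) :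
    ∃ w, MapsStar ψ v w := by
  -- `u` lies on a second edge, so its star goes to the star of some `w'`, and `ψ e = s(w', w)`.
  -- An edge `ψ e' ≠ ψ e` through `w` would make the star of `w` the image of the star of an
  -- endpoint of `e`; that endpoint is neither the leaf `v` nor `u`, whose star goes to `w'`.
  set e : G.edgeSet := ⟨s(v, u), hvu⟩
  obtain ⟨f, hfe, hu⟩ := hG.exists_ne_mem_of_forall_mem_eq (by omega) hleaf
  obtain ⟨w', hw'⟩ := hG.exists_mapsStar_of_mem_of_mem hcard ψ (e₁ := e)
    (by rintro rfl; exact hfe rfl) (Sym2.mem_mk_right v u) hu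
  obtain ⟨w, hw⟩ := Sym2.mem_iff_exists.1 ((hw' e).1 (Sym2.mem_mk_right v u))
  have hww' : w' ≠ w := G.ne_of_adj (hw ▸ (ψ e).2 : s(w', w) ∈ G.edgeSet)
  refine ⟨w, fun e' => ⟨fun hv => ?_, fun hwe' => ?_⟩⟩
  · rw [show e' = e from Subtype.ext (hleaf e' hv), hw]
    exact Sym2.mem_mk_right w' w
  by_contra hve'
  have hne : ψ e ≠ ψ e' := ψ.injective.ne fun h => hve' (h ▸ Sym2.mem_mk_left v u)
  obtain ⟨x, hx⟩ := hG.exists_mapsStar_of_mem_of_mem hcard ψ.symm hne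
    (hw ▸ Sym2.mem_mk_right w' w) hwe'
  rw [mapsStar_symm_iff] at hx
  rcases Sym2.mem_iff.1 ((hx e).2 (hw ▸ Sym2.mem_mk_right w' w)) with rfl | rfl
  · exact hve' ((hx e').2 hwe')
  · exact hww' (hw'.right_unique hG (by omega) hx)

theorem Connected.exists_mapsStar [Fintype V] (hG : G.Connected) (hcard : 5 ≤ Fintype.card V)
    (ψ : G.lineGraph ≃g G.lineGraph) (v : V) : ∃ w, MapsStar ψ v w := by
  classical
  by_cases hdeg : ∃ e₁ e₂ : G.edgeSet, e₁ ≠ e₂ ∧ v ∈ (e₁ : Sym2 V) ∧ v ∈ (e₂ : Sym2 V)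
  · obtain ⟨e₁, e₂, hne, h₁, h₂⟩ := hdeg
    exact hG.exists_mapsStar_of_mem_of_mem hcard ψ hne h₁ h₂
  push Not at hdeg
  obtain ⟨p, hp, u, -, hpu⟩ := hG.exists_adj_of_card_lt (s := {v})
    (by rw [Finset.card_singleton]; omega) (Finset.mem_singleton_self v)
  obtain rfl := Finset.mem_singleton.1 hp
  refine hG.exists_mapsStar_of_forall_mem_eq hcard ψ hpu fun e hv => ?_
  by_contra hne
  exact hdeg e ⟨s(p, u), hpu⟩ (fun h => hne (h ▸ rfl)) hv (Sym2.mem_mk_left p u)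

end SimpleGraph

open SimpleGraph

theorem aut_lineGraph_eq_aut {V : Type*} [Fintype V] (G : SimpleGraph V)
    (hconn : G.Connected) (hcard : 5 ≤ Fintype.card V) :
    ∀ ψ : G.lineGraph ≃g G.lineGraph,
      ∃! γ : G ≃g G, ∀ e : G.edgeSet, ψ e = γ.mapEdgeSet e := by
  intro ψ
  choose γ hγ using hconn.exists_mapsStar hcard ψ
  have hinj : Function.Injective γ := fun a b hab =>
    (hγ a).left_unique hconn (by omega) (hab ▸ hγ b)
  refine ⟨⟨Equiv.ofBijective γ (Finite.injective_iff_bijective.1 hinj),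
      MapsStar.adj_iff hγ hinj⟩, fun e => Subtype.ext (MapsStar.coe_apply_eq_map hγ hinj e),
    fun γ' hγ' => ?_⟩
  exact RelIso.ext fun v =>
    (mapsStar_of_apply_eq_mapEdgeSet hγ' v).right_unique hconn (by omega) (hγ v)
end

section
/- If G is a finite connected graph whose automorphism group acts regularly on the arcs of G (i.e., for any two ordered pairs of adjacent vertices there is a unique automorphism mapping one to the other) and G is 4-regular, then G has distinguishing number 2. -/
open SimpleGraph

/-- `Aut G` acts regularly on arcs: for any two ordered pairs of adjacent vertices
there is a unique automorphism mapping one to the other. -/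
def IsArcRegular {V : Type*} (G : SimpleGraph V) : Prop :=
  ∀ a b c d : V, G.Adj a b → G.Adj c d → ∃! γ : G ≃g G, γ a = c ∧ γ b = d

namespace AR
variable {V : Type*} {G : SimpleGraph V}

lemma fix_arc (harc : IsArcRegular G) {x y : V} (hxy : G.Adj x y)
    (γ : G ≃g G) (hx : γ x = x) (hy : γ y = y) : ∀ z, γ z = z := by
  obtain ⟨δ, -, huniq⟩ := harc x y x y hxy hxy
  have h1 : γ = δ := huniq γ ⟨hx, hy⟩
  have h2 : (Iso.refl : G ≃g G) = δ := huniq _ ⟨rfl, rfl⟩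
  intro z
  have := congrArg (fun (e : G ≃g G) => e z) (h1.trans h2.symm)
  simpa using this

lemma adj_symm_iff (γ : G ≃g G) (u x : V) : G.Adj (γ u) x ↔ G.Adj u (γ.symm x) := by
  conv_lhs => rw [← γ.apply_symm_apply x]
  exact γ.map_adj_iff

lemma swap_false [DecidableEq V] (harc : IsArcRegular G) {v a b d : V} (hva : G.Adj v a)
    (hbd : b ≠ d) (hvb : v ≠ b) (hvd : v ≠ d) (hab : a ≠ b) (had : a ≠ d)
    (K : ∀ x, x ≠ b → x ≠ d → (G.Adj b x ↔ G.Adj d x)) : False := by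
  have fwd : ∀ x y, G.Adj x y → G.Adj (Equiv.swap b d x) (Equiv.swap b d y) := by
    have hs : ∀ z, z ≠ b → z ≠ d → Equiv.swap b d z = z :=
      fun z h1 h2 => Equiv.swap_apply_of_ne_of_ne h1 h2
    have hsb : Equiv.swap b d b = d := Equiv.swap_apply_left b d
    have hsd : Equiv.swap b d d = b := Equiv.swap_apply_right b d
    intro x y h
    by_cases hxb : x = b
    · by_cases hyb : y = b
      · rw [hxb, hyb] at h; exact absurd h (G.irrefl)
      · by_cases hyd : y = d
        · rw [hxb, hyd] at h
          rw [hxb, hyd, hsb, hsd]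
          exact h.symm
        · rw [hxb, hsb, hs y hyb hyd]
          rw [hxb] at h
          exact (K y hyb hyd).mp h
    · by_cases hxd : x = d
      · by_cases hyb : y = b
        · rw [hxd, hyb] at h
          rw [hxd, hyb, hsb, hsd]
          exact h.symm
        · by_cases hyd : y = d
          · rw [hxd, hyd] at h; exact absurd h (G.irrefl)
          · rw [hxd, hsd, hs y hyb hyd]
            rw [hxd] at h
            exact (K y hyb hyd).mpr h
      · rw [hs x hxb hxd]
        by_cases hyb : y = b
        · rw [hyb, hsb]
          rw [hyb] at h
          exact ((K x hxb hxd).mp h.symm).symm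
        · by_cases hyd : y = d
          · rw [hyd, hsd]
            rw [hyd] at h
            exact ((K x hxb hxd).mpr h.symm).symm
          · rw [hs y hyb hyd]
            exact h
  let γ : G ≃g G :=
    { toEquiv := Equiv.swap b d
      map_rel_iff' := by
        intro x y
        constructor
        · intro h
          have := fwd _ _ h
          simpa using this
        · exact fwd x y }
  have hγ : ∀ z, γ z = Equiv.swap b d z := fun z => rfl
  have hγv : γ v = v := by rw [hγ, Equiv.swap_apply_of_ne_of_ne hvb hvd]
  have hγa : γ a = a := by rw [hγ, Equiv.swap_apply_of_ne_of_ne hab had]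
  have hb := fix_arc harc hva γ hγv hγa b
  rw [hγ, Equiv.swap_apply_left] at hb
  exact hbd hb.symm

variable [DecidableEq V] [Fintype V] [DecidableRel G.Adj]

lemma common_card (harc : IsArcRegular G) {v a p q : V} (hva : G.Adj v a) (hpq : G.Adj p q) :
    (G.neighborFinset p ∩ G.neighborFinset q).card
      = (G.neighborFinset v ∩ G.neighborFinset a).card := by
  obtain ⟨γ, ⟨hγv, hγa⟩, -⟩ := harc v a p q hva hpq
  have himg : G.neighborFinset p ∩ G.neighborFinset q
      = (G.neighborFinset v ∩ G.neighborFinset a).image γ := by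
    ext x
    simp only [Finset.mem_inter, mem_neighborFinset, Finset.mem_image]
    constructor
    · rintro ⟨h1, h2⟩
      rw [← hγv, adj_symm_iff] at h1
      rw [← hγa, adj_symm_iff] at h2
      exact ⟨γ.symm x, ⟨h1, h2⟩, γ.apply_symm_apply x⟩
    · rintro ⟨w, ⟨h1, h2⟩, rfl⟩
      rw [← hγv, ← hγa]
      exact ⟨γ.map_adj_iff.mpr h1, γ.map_adj_iff.mpr h2⟩
  rw [himg, Finset.card_image_of_injective _ γ.injective]


lemma nbhd_eq_quad (hreg : G.IsRegularOfDegree 4) {s w x y z : V}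
    (hw : G.Adj s w) (hx : G.Adj s x) (hy : G.Adj s y) (hz : G.Adj s z)
    (hwx : w ≠ x) (hwy : w ≠ y) (hwz : w ≠ z) (hxy : x ≠ y) (hxz : x ≠ z) (hyz : y ≠ z) :
    G.neighborFinset s = {w, x, y, z} := by
  have hsub : ({w, x, y, z} : Finset V) ⊆ G.neighborFinset s := by
    intro u hu
    simp only [Finset.mem_insert, Finset.mem_singleton] at hu
    rcases hu with rfl | rfl | rfl | rfl
    · exact (mem_neighborFinset G s u).mpr hw
    · exact (mem_neighborFinset G s u).mpr hx
    · exact (mem_neighborFinset G s u).mpr hy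
    · exact (mem_neighborFinset G s u).mpr hz
  have hcard : ({w, x, y, z} : Finset V).card = 4 := by
    rw [Finset.card_insert_of_notMem (by simp [hwx, hwy, hwz]),
        Finset.card_insert_of_notMem (by simp [hxy, hxz]),
        Finset.card_insert_of_notMem (by simp [hyz]), Finset.card_singleton]
  have h4 : (G.neighborFinset s).card = 4 := hreg s
  exact (Finset.eq_of_subset_of_card_le hsub (by rw [h4, hcard])).symm

/-- If `γ` fixes `a`, and cycles `v ↦ x1 ↦ x2 ↦ v` inside `N(a)`, contradiction
(via the fourth neighbour of `a`). -/
lemma key (harc : IsArcRegular G) (hreg : G.IsRegularOfDegree 4)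
    {v a x1 x2 : V} (hva : G.Adj v a) (hax1 : G.Adj a x1) (hax2 : G.Adj a x2)
    (hx1v : x1 ≠ v) (hx2v : x2 ≠ v) (hx12 : x1 ≠ x2)
    (γ : G ≃g G) (hγa : γ a = a) (hγv : γ v = x1) (hγx1 : γ x1 = x2) (hγx2 : γ x2 = v) :
    False := by
  -- the fourth neighbour of a
  have hT : ({v, x1, x2} : Finset V) ⊆ G.neighborFinset a := by
    intro u hu
    simp only [Finset.mem_insert, Finset.mem_singleton] at hu
    rcases hu with rfl | rfl | rfl
    · exact (mem_neighborFinset G a u).mpr hva.symm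
    · exact (mem_neighborFinset G a u).mpr hax1
    · exact (mem_neighborFinset G a u).mpr hax2
  have hTcard : ({v, x1, x2} : Finset V).card = 3 := by
    rw [Finset.card_insert_of_notMem (by simp [Ne.symm hx1v, Ne.symm hx2v]),
        Finset.card_insert_of_notMem (by simp [hx12]), Finset.card_singleton]
  have hne : (G.neighborFinset a \ {v, x1, x2}).Nonempty := by
    have h4 : (G.neighborFinset a).card = 4 := hreg a
    rw [← Finset.card_pos, Finset.card_sdiff_of_subset hT, h4, hTcard]
    norm_num
  obtain ⟨t, ht⟩ := hne
  rw [Finset.mem_sdiff] at ht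
  obtain ⟨hta, htn⟩ := ht
  simp only [Finset.mem_insert, Finset.mem_singleton, not_or] at htn
  obtain ⟨htv, htx1, htx2⟩ := htn
  have hat : G.Adj a t := (mem_neighborFinset G a t).mp hta
  have hNa : G.neighborFinset a = {v, x1, x2, t} :=
    nbhd_eq_quad hreg hva.symm hax1 hax2 hat (Ne.symm hx1v) (Ne.symm hx2v)
      (Ne.symm htv) hx12 (Ne.symm htx1) (Ne.symm htx2)
  have hγt : γ t ∈ G.neighborFinset a := by
    rw [mem_neighborFinset, ← hγa]
    exact γ.map_adj_iff.mpr hat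
  rw [hNa] at hγt
  simp only [Finset.mem_insert, Finset.mem_singleton] at hγt
  have hγtt : γ t = t := by
    rcases hγt with h | h | h | h
    · exact absurd (γ.injective (h.trans hγx2.symm)) htx2
    · exact absurd (γ.injective (h.trans hγv.symm)) htv
    · exact absurd (γ.injective (h.trans hγx1.symm)) htx1
    · exact h
  have := fix_arc harc hat γ hγa hγtt v
  rw [hγv] at this
  exact hx1v this

/-- Handle the branch `γ v = x1` in the 4-point colouring argument. -/
lemma branch (harc : IsArcRegular G) (hreg : G.IsRegularOfDegree 4)
    {v a x1 x2 : V} (hva : G.Adj v a) (hax1 : G.Adj a x1) (hax2 : G.Adj a x2)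
    (hx1v : x1 ≠ v) (hx2v : x2 ≠ v) (hx12 : x1 ≠ x2)
    (γ : G ≃g G) (hγa : γ a = a) (hγv : γ v = x1)
    (hγx1B : γ x1 = v ∨ γ x1 = a ∨ γ x1 = x1 ∨ γ x1 = x2)
    (hγx2B : γ x2 = v ∨ γ x2 = a ∨ γ x2 = x1 ∨ γ x2 = x2) :
    ∀ z, γ z = z := by
  rcases hγx2B with h2 | h2 | h2 | h2
  · -- γ x2 = v ; show γ x1 = x2, then contradiction via `key`
    have hx1eq : γ x1 = x2 := by
      rcases hγx1B with h1 | h1 | h1 | h1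
      · exact absurd (γ.injective (h1.trans h2.symm)) hx12
      · exact absurd (γ.injective (h1.trans hγa.symm)) hax1.ne'
      · exact absurd (γ.injective (h1.trans hγv.symm)) hx1v
      · exact h1
    exact absurd (key harc hreg hva hax1 hax2 hx1v hx2v hx12 γ hγa hγv hx1eq h2) id
  · exact absurd (γ.injective (h2.trans hγa.symm)) hax2.ne'
  · exact absurd (γ.injective (h2.trans hγv.symm)) hx2v
  · exact fix_arc harc hax2 γ hγa h2

/-- The 4-point set `{v, a, x1, x2}` gives a distinguishing 2-colouring. -/
lemma distinguishing_B (harc : IsArcRegular G) (hreg : G.IsRegularOfDegree 4)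
    {v a x1 x2 : V} (hva : G.Adj v a) (hax1 : G.Adj a x1) (hax2 : G.Adj a x2)
    (hvx1 : ¬ G.Adj v x1) (hvx2 : ¬ G.Adj v x2)
    (hx1v : x1 ≠ v) (hx2v : x2 ≠ v) (hx12 : x1 ≠ x2) :
    ∃ c : V → Fin 2, IsDistinguishing G c := by
  set B : Finset V := {v, a, x1, x2} with hBdef
  have hmemB : ∀ z, z ∈ B ↔ (z = v ∨ z = a ∨ z = x1 ∨ z = x2) := by
    intro z; simp [hBdef]
  refine ⟨fun z => if z ∈ B then 1 else 0, ?_⟩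
  intro γ hc
  have hB : ∀ z, γ z ∈ B ↔ z ∈ B := by
    intro z
    have := hc z
    by_cases h1 : γ z ∈ B <;> by_cases h2 : z ∈ B <;>
      simp [h1, h2] at this ⊢
  have hBsymm : ∀ z, z ∈ B → γ.symm z ∈ B := by
    intro z hz
    apply (hB _).mp
    rwa [γ.apply_symm_apply]
  have hvB : v ∈ B := (hmemB v).mpr (Or.inl rfl)
  have haB : a ∈ B := (hmemB a).mpr (Or.inr (Or.inl rfl))
  have hx1B : x1 ∈ B := (hmemB x1).mpr (Or.inr (Or.inr (Or.inl rfl)))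
  have hx2B : x2 ∈ B := (hmemB x2).mpr (Or.inr (Or.inr (Or.inr rfl)))
  -- a is adjacent to every other element of B
  have hadjB : ∀ w, w ∈ B → w ≠ a → G.Adj a w := by
    intro w hw hwa
    rcases (hmemB w).mp hw with rfl | rfl | rfl | rfl
    · exact hva.symm
    · exact absurd rfl hwa
    · exact hax1
    · exact hax2
  -- γ a is adjacent to every other element of B
  have hP : ∀ w, w ∈ B → w ≠ γ a → G.Adj (γ a) w := by
    intro w hw hne
    have hw' : γ.symm w ∈ B := hBsymm w hw
    have hne' : γ.symm w ≠ a := by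
      intro h
      apply hne
      rw [← γ.apply_symm_apply w, h]
    have h := γ.map_adj_iff.mpr (hadjB _ hw' hne')
    rwa [γ.apply_symm_apply] at h
  have hγa : γ a = a := by
    rcases (hmemB (γ a)).mp ((hB a).mpr haB) with h | h | h | h
    · exfalso
      apply hvx1
      have := hP x1 hx1B (by rw [h]; exact hx1v)
      rwa [h] at this
    · exact h
    · exfalso
      apply hvx1
      have := hP v hvB (by rw [h]; exact Ne.symm hx1v)
      rw [h] at this
      exact this.symm
    · exfalso
      apply hvx2
      have := hP v hvB (by rw [h]; exact Ne.symm hx2v)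
      rw [h] at this
      exact this.symm
  rcases (hmemB (γ v)).mp ((hB v).mpr hvB) with h | h | h | h
  · exact fix_arc harc hva γ h hγa
  · exact absurd (γ.injective (h.trans hγa.symm)) hva.ne
  · exact branch harc hreg hva hax1 hax2 hx1v hx2v hx12 γ hγa h
      ((hmemB (γ x1)).mp ((hB x1).mpr hx1B)) ((hmemB (γ x2)).mp ((hB x2).mpr hx2B))
  · -- symmetric: swap roles of x1, x2
    have := branch harc hreg hva hax2 hax1 hx2v hx1v (Ne.symm hx12) γ hγa h ?_ ?_
    · exact this
    · rcases (hmemB (γ x2)).mp ((hB x2).mpr hx2B) with h' | h' | h' | h' <;> tauto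
    · rcases (hmemB (γ x1)).mp ((hB x1).mpr hx1B) with h' | h' | h' | h' <;> tauto

lemma inter_eq_erase (hreg : G.IsRegularOfDegree 4) {p q : V} (hpq : G.Adj p q)
    (h3 : (G.neighborFinset p ∩ G.neighborFinset q).card = 3) :
    G.neighborFinset p ∩ G.neighborFinset q = (G.neighborFinset p).erase q := by
  have hsub : G.neighborFinset p ∩ G.neighborFinset q ⊆ (G.neighborFinset p).erase q := by
    intro x hx
    rw [Finset.mem_inter] at hx
    exact Finset.mem_erase.mpr ⟨((mem_neighborFinset G q x).mp hx.2).ne', hx.1⟩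
  have h4 : (G.neighborFinset p).card = 4 := hreg p
  have hq : q ∈ G.neighborFinset p := (mem_neighborFinset G p q).mpr hpq
  have hcard : ((G.neighborFinset p).erase q).card = 3 := by
    rw [Finset.card_erase_of_mem hq, h4]
  exact Finset.eq_of_subset_of_card_le hsub (by rw [hcard, h3])

lemma lam3_false (harc : IsArcRegular G) (hreg : G.IsRegularOfDegree 4)
    {v a : V} (hva : G.Adj v a)
    (hC : (G.neighborFinset v ∩ G.neighborFinset a).card = 3) : False := by
  have hcc : ∀ p q, G.Adj p q → (G.neighborFinset p ∩ G.neighborFinset q).card = 3 :=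
    fun p q h => (common_card harc hva h).trans hC
  set C := G.neighborFinset v ∩ G.neighborFinset a with hCdef
  -- get three distinct elements of C
  obtain ⟨b, hbC, d, hdC, hbd⟩ := Finset.one_lt_card.mp (by rw [hC]; norm_num : 1 < C.card)
  have hc0 : (C \ {b, d}).Nonempty := by
    rw [← Finset.card_pos]
    have : ({b, d} : Finset V) ⊆ C := by
      intro x hx
      simp only [Finset.mem_insert, Finset.mem_singleton] at hx
      rcases hx with rfl | rfl
      · exact hbC
      · exact hdC
    have hcard2 : ({b, d} : Finset V).card = 2 := by
      rw [Finset.card_insert_of_notMem (by simp [hbd]), Finset.card_singleton]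
    rw [Finset.card_sdiff_of_subset this, hC, hcard2]
    norm_num
  obtain ⟨c0, hc0m⟩ := hc0
  rw [Finset.mem_sdiff] at hc0m
  obtain ⟨hc0C, hc0n⟩ := hc0m
  simp only [Finset.mem_insert, Finset.mem_singleton, not_or] at hc0n
  obtain ⟨hc0b, hc0d⟩ := hc0n
  -- adjacency facts
  have hmemC : ∀ x, x ∈ C → G.Adj v x ∧ G.Adj a x := by
    intro x hx
    rw [hCdef, Finset.mem_inter] at hx
    exact ⟨(mem_neighborFinset G v x).mp hx.1, (mem_neighborFinset G a x).mp hx.2⟩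
  obtain ⟨hvb, hab⟩ := hmemC b hbC
  obtain ⟨hvd, had⟩ := hmemC d hdC
  obtain ⟨hvc0, hac0⟩ := hmemC c0 hc0C
  -- N v = {a, b, d, c0}
  -- neighbourhoods of b and d
  have herase : ∀ p, G.Adj v p →
      G.neighborFinset v ∩ G.neighborFinset p = (G.neighborFinset v).erase p :=
    fun p hp => inter_eq_erase hreg hp (hcc v p hp)
  have hmem_of : ∀ p x, G.Adj v p → G.Adj v x → x ≠ p → G.Adj p x := by
    intro p x hp hx hxp
    have : x ∈ (G.neighborFinset v).erase p :=
      Finset.mem_erase.mpr ⟨hxp, (mem_neighborFinset G v x).mpr hx⟩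
    rw [← herase p hp, Finset.mem_inter] at this
    exact (mem_neighborFinset G p x).mp this.2
  have hba : G.Adj b a := hmem_of b a hvb hva hab.ne
  have hbd2 : G.Adj b d := hmem_of b d hvb hvd (Ne.symm hbd)
  have hbc0 : G.Adj b c0 := hmem_of b c0 hvb hvc0 hc0b
  have hda : G.Adj d a := hmem_of d a hvd hva had.ne
  have hdb : G.Adj d b := hbd2.symm
  have hdc0 : G.Adj d c0 := hmem_of d c0 hvd hvc0 hc0d
  have hNb : G.neighborFinset b = {v, a, d, c0} :=
    nbhd_eq_quad hreg hvb.symm hba hbd2 hbc0 hva.ne hvd.ne hvc0.ne had.ne hac0.ne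
      (Ne.symm hc0d)
  have hNd : G.neighborFinset d = {v, a, b, c0} :=
    nbhd_eq_quad hreg hvd.symm hda hdb hdc0 hva.ne hvb.ne hvc0.ne hab.ne hac0.ne
      (Ne.symm hc0b)
  have K : ∀ x, x ≠ b → x ≠ d → (G.Adj b x ↔ G.Adj d x) := by
    intro x hxb hxd
    rw [← mem_neighborFinset, ← mem_neighborFinset, hNb, hNd]
    simp only [Finset.mem_insert, Finset.mem_singleton]
    constructor
    · rintro (rfl | rfl | rfl | rfl) <;> tauto
    · rintro (rfl | rfl | rfl | rfl) <;> tauto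
  exact swap_false harc hva hbd hvb.ne hvd.ne hab.ne had.ne K

/-- In the λ=2 case, find the fourth neighbour `e` of `p` (where `p` is a common
neighbour of `v` and `a`, with `N v ∩ N p = {a, c}`). -/
lemma find_e (harc : IsArcRegular G) (hreg : G.IsRegularOfDegree 4)
    {v a p c : V} (hva : G.Adj v a) (hvp : G.Adj v p) (hap : G.Adj a p)
    (hvc : G.Adj v c) (hac : ¬ G.Adj a c) (hacne : a ≠ c) (hpc : p ≠ c)
    (hNvNp : G.neighborFinset v ∩ G.neighborFinset p = {a, c})
    (h2 : ∀ x y, G.Adj x y → (G.neighborFinset x ∩ G.neighborFinset y).card = 2) :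
    ∃ e, G.Adj p e ∧ G.Adj a e ∧ ¬ G.Adj v e ∧ e ≠ v ∧ e ≠ a ∧ e ≠ c ∧
      G.neighborFinset p = {v, a, c, e} := by
  have hpc' : G.Adj p c := by
    have : c ∈ G.neighborFinset v ∩ G.neighborFinset p := by
      rw [hNvNp]; simp
    rw [Finset.mem_inter] at this
    exact (mem_neighborFinset G p c).mp this.2
  have hT : ({v, a, c} : Finset V) ⊆ G.neighborFinset p := by
    intro u hu
    simp only [Finset.mem_insert, Finset.mem_singleton] at hu
    rcases hu with rfl | rfl | rfl
    · exact (mem_neighborFinset G p u).mpr hvp.symm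
    · exact (mem_neighborFinset G p u).mpr hap.symm
    · exact (mem_neighborFinset G p u).mpr hpc'
  have hTcard : ({v, a, c} : Finset V).card = 3 := by
    rw [Finset.card_insert_of_notMem (by simp [hva.ne, hvc.ne]),
        Finset.card_insert_of_notMem (by simp [hacne]), Finset.card_singleton]
  have hne : (G.neighborFinset p \ {v, a, c}).Nonempty := by
    have h4 : (G.neighborFinset p).card = 4 := hreg p
    rw [← Finset.card_pos, Finset.card_sdiff_of_subset hT, h4, hTcard]
    norm_num
  obtain ⟨e, he⟩ := hne
  rw [Finset.mem_sdiff] at he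
  obtain ⟨heN, hen⟩ := he
  simp only [Finset.mem_insert, Finset.mem_singleton, not_or] at hen
  obtain ⟨hev, hea, hec⟩ := hen
  have hpe : G.Adj p e := (mem_neighborFinset G p e).mp heN
  have hve : ¬ G.Adj v e := by
    intro h
    have : e ∈ G.neighborFinset v ∩ G.neighborFinset p :=
      Finset.mem_inter.mpr ⟨(mem_neighborFinset G v e).mpr h,
        (mem_neighborFinset G p e).mpr hpe⟩
    rw [hNvNp] at this
    simp only [Finset.mem_insert, Finset.mem_singleton] at this
    tauto
  have hNp : G.neighborFinset p = {v, a, c, e} :=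
    nbhd_eq_quad hreg hvp.symm hap.symm hpc' hpe hva.ne hvc.ne (Ne.symm hev) hacne
      (Ne.symm hea) (Ne.symm hec)
  -- Adj a e via the edge (a, p)
  have hape : (G.neighborFinset a ∩ G.neighborFinset p).card = 2 := h2 a p hap
  have hsub : G.neighborFinset a ∩ G.neighborFinset p ⊆ {v, e} := by
    intro x hx
    rw [Finset.mem_inter] at hx
    have hx2 := hx.2
    rw [hNp] at hx2
    simp only [Finset.mem_insert, Finset.mem_singleton] at hx2 ⊢
    have hxa : G.Adj a x := (mem_neighborFinset G a x).mp hx.1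
    rcases hx2 with rfl | rfl | rfl | rfl
    · tauto
    · exact absurd hxa (G.irrefl)
    · exact absurd hxa hac
    · tauto
  have hveq : G.neighborFinset a ∩ G.neighborFinset p = {v, e} := by
    apply Finset.eq_of_subset_of_card_le hsub
    rw [hape]
    have : ({v, e} : Finset V).card ≤ 2 := Finset.card_insert_le _ _ |>.trans (by simp)
    exact this
  have hae : G.Adj a e := by
    have : e ∈ G.neighborFinset a ∩ G.neighborFinset p := by rw [hveq]; simp
    rw [Finset.mem_inter] at this
    exact (mem_neighborFinset G a e).mp this.1
  exact ⟨e, hpe, hae, hve, hev, hea, hec, hNp⟩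

lemma lam2_false (harc : IsArcRegular G) (hreg : G.IsRegularOfDegree 4)
    {v a : V} (hva : G.Adj v a)
    (hC : (G.neighborFinset v ∩ G.neighborFinset a).card = 2) : False := by
  have hcc : ∀ p q, G.Adj p q → (G.neighborFinset p ∩ G.neighborFinset q).card = 2 :=
    fun p q h => (common_card harc hva h).trans hC
  set C := G.neighborFinset v ∩ G.neighborFinset a with hCdef
  obtain ⟨b, hbC, d, hdC, hbd⟩ := Finset.one_lt_card.mp (by rw [hC]; norm_num : 1 < C.card)
  have hCeq : C = {b, d} := by
    have hsub : ({b, d} : Finset V) ⊆ C := by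
      intro x hx
      simp only [Finset.mem_insert, Finset.mem_singleton] at hx
      rcases hx with rfl | rfl
      · exact hbC
      · exact hdC
    have hcard2 : ({b, d} : Finset V).card = 2 := by
      rw [Finset.card_insert_of_notMem (by simp [hbd]), Finset.card_singleton]
    exact (Finset.eq_of_subset_of_card_le hsub (by rw [hC, hcard2])).symm
  have hmemC : ∀ x, x ∈ C → G.Adj v x ∧ G.Adj a x := by
    intro x hx
    rw [hCdef, Finset.mem_inter] at hx
    exact ⟨(mem_neighborFinset G v x).mp hx.1, (mem_neighborFinset G a x).mp hx.2⟩
  obtain ⟨hvb, hab⟩ := hmemC b hbC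
  obtain ⟨hvd, had⟩ := hmemC d hdC
  -- the fourth neighbour c of v
  have hT : ({a, b, d} : Finset V) ⊆ G.neighborFinset v := by
    intro u hu
    simp only [Finset.mem_insert, Finset.mem_singleton] at hu
    rcases hu with rfl | rfl | rfl
    · exact (mem_neighborFinset G v u).mpr hva
    · exact (mem_neighborFinset G v u).mpr hvb
    · exact (mem_neighborFinset G v u).mpr hvd
  have hTcard : ({a, b, d} : Finset V).card = 3 := by
    rw [Finset.card_insert_of_notMem (by simp [hab.ne, had.ne]),
        Finset.card_insert_of_notMem (by simp [hbd]), Finset.card_singleton]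
  have hcne : (G.neighborFinset v \ {a, b, d}).Nonempty := by
    have h4 : (G.neighborFinset v).card = 4 := hreg v
    rw [← Finset.card_pos, Finset.card_sdiff_of_subset hT, h4, hTcard]
    norm_num
  obtain ⟨c, hc⟩ := hcne
  rw [Finset.mem_sdiff] at hc
  obtain ⟨hcN, hcn⟩ := hc
  simp only [Finset.mem_insert, Finset.mem_singleton, not_or] at hcn
  obtain ⟨hca, hcb, hcd⟩ := hcn
  have hvc : G.Adj v c := (mem_neighborFinset G v c).mp hcN
  have hNv : G.neighborFinset v = {a, b, d, c} :=
    nbhd_eq_quad hreg hva hvb hvd hvc hab.ne had.ne (Ne.symm hca) hbd (Ne.symm hcb)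
      (Ne.symm hcd)
  have hac : ¬ G.Adj a c := by
    intro h
    have : c ∈ C := by
      rw [hCdef, Finset.mem_inter]
      exact ⟨hcN, (mem_neighborFinset G a c).mpr h⟩
    rw [hCeq] at this
    simp only [Finset.mem_insert, Finset.mem_singleton] at this
    tauto
  -- b and d are not adjacent
  have hbd2 : ¬ G.Adj b d := by
    intro hbd'
    have h2c : (G.neighborFinset v ∩ G.neighborFinset c).card = 2 := hcc v c hvc
    have hnon : (G.neighborFinset v ∩ G.neighborFinset c).Nonempty := by
      rw [← Finset.card_pos, h2c]; norm_num
    obtain ⟨z, hz⟩ := hnon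
    rw [Finset.mem_inter] at hz
    have hzc : G.Adj c z := (mem_neighborFinset G c z).mp hz.2
    have hz1 := hz.1
    rw [hNv] at hz1
    simp only [Finset.mem_insert, Finset.mem_singleton] at hz1
    -- helper : for p ∈ {b, d} adjacent to the other, N v ∩ N p = {a, other}
    have hNvNp : ∀ p o, G.Adj v p → G.Adj a p → G.Adj p o → G.Adj v o → a ≠ o →
        G.neighborFinset v ∩ G.neighborFinset p = {a, o} := by
      intro p o hvp hap hpo hvo hao
      have hsub : ({a, o} : Finset V) ⊆ G.neighborFinset v ∩ G.neighborFinset p := by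
        intro x hx
        simp only [Finset.mem_insert, Finset.mem_singleton] at hx
        rw [Finset.mem_inter]
        rcases hx with rfl | rfl
        · exact ⟨(mem_neighborFinset G v x).mpr hva, (mem_neighborFinset G p x).mpr hap.symm⟩
        · exact ⟨(mem_neighborFinset G v x).mpr hvo, (mem_neighborFinset G p x).mpr hpo⟩
      have hcard2 : ({a, o} : Finset V).card = 2 := by
        rw [Finset.card_insert_of_notMem (by simp [hao]), Finset.card_singleton]
      exact (Finset.eq_of_subset_of_card_le hsub (by rw [hcc v p hvp, hcard2])).symm
    rcases hz1 with h | h | h | h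
    · rw [h] at hzc
      exact hac hzc.symm
    · -- z = b : c ∈ N v ∩ N b = {a, d}
      rw [h] at hzc
      have heq := hNvNp b d hvb hab hbd' hvd had.ne
      have : c ∈ G.neighborFinset v ∩ G.neighborFinset b :=
        Finset.mem_inter.mpr ⟨hcN, (mem_neighborFinset G b c).mpr hzc.symm⟩
      rw [heq] at this
      simp only [Finset.mem_insert, Finset.mem_singleton] at this
      tauto
    · -- z = d
      rw [h] at hzc
      have heq := hNvNp d b hvd had hbd'.symm hvb hab.ne
      have : c ∈ G.neighborFinset v ∩ G.neighborFinset d :=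
        Finset.mem_inter.mpr ⟨hcN, (mem_neighborFinset G d c).mpr hzc.symm⟩
      rw [heq] at this
      simp only [Finset.mem_insert, Finset.mem_singleton] at this
      tauto
    · rw [h] at hzc
      exact G.irrefl hzc
  -- N v ∩ N b = {a, c} and N v ∩ N d = {a, c}
  have hinter : ∀ p, p = b ∨ p = d → G.Adj v p →
      G.neighborFinset v ∩ G.neighborFinset p = {a, c} := by
    intro p hp hvp
    have hsub : G.neighborFinset v ∩ G.neighborFinset p ⊆ {a, c} := by
      intro x hx
      rw [Finset.mem_inter] at hx
      have hx1 := hx.1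
      have hxp : G.Adj p x := (mem_neighborFinset G p x).mp hx.2
      rw [hNv] at hx1
      simp only [Finset.mem_insert, Finset.mem_singleton] at hx1 ⊢
      rcases hx1 with rfl | rfl | rfl | rfl
      · tauto
      · -- x = b
        rcases hp with rfl | rfl
        · exact absurd hxp (G.irrefl)
        · exact absurd hxp.symm hbd2
      · rcases hp with rfl | rfl
        · exact absurd hxp hbd2
        · exact absurd hxp (G.irrefl)
      · tauto
    apply Finset.eq_of_subset_of_card_le hsub
    rw [hcc v p hvp]
    exact (Finset.card_insert_le _ _).trans (by simp)
  obtain ⟨e, hbe, hae, hve, hev, hea, hec, hNb⟩ :=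
    find_e harc hreg hva hvb hab hvc hac (Ne.symm hca) (Ne.symm hcb)
      (hinter b (Or.inl rfl) hvb) hcc
  obtain ⟨e2, hde2, hae2, hve2, he2v, he2a, he2c, hNd⟩ :=
    find_e harc hreg hva hvd had hvc hac (Ne.symm hca) (Ne.symm hcd)
      (hinter d (Or.inr rfl) hvd) hcc
  -- N a = {v, b, d, e}
  have hbe' : b ≠ e := fun h => hve (h ▸ hvb)
  have hde' : d ≠ e := fun h => hve (h ▸ hvd)
  have hNa : G.neighborFinset a = {v, b, d, e} :=
    nbhd_eq_quad hreg hva.symm hab had hae hvb.ne hvd.ne (Ne.symm hev) hbd hbe' hde'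
  have he2e : e2 = e := by
    have : e2 ∈ G.neighborFinset a := (mem_neighborFinset G a e2).mpr hae2
    rw [hNa] at this
    simp only [Finset.mem_insert, Finset.mem_singleton] at this
    rcases this with rfl | rfl | rfl | h
    · exact absurd rfl he2v
    · exact absurd hvb hve2
    · exact absurd hvd hve2
    · exact h
  rw [he2e] at hNd
  have K : ∀ x, x ≠ b → x ≠ d → (G.Adj b x ↔ G.Adj d x) := by
    intro x _ _
    rw [← mem_neighborFinset, ← mem_neighborFinset, hNb, hNd]
  exact swap_false harc hva hbd hvb.ne hvd.ne hab.ne had.ne K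

lemma exists_col (harc : IsArcRegular G) (hreg : G.IsRegularOfDegree 4) (v : V) :
    ∃ c : V → Fin 2, IsDistinguishing G c := by
  obtain ⟨a, ha⟩ : (G.neighborFinset v).Nonempty := by
    rw [← Finset.card_pos]
    have h4 : (G.neighborFinset v).card = 4 := hreg v
    rw [h4]; norm_num
  have hva : G.Adj v a := (mem_neighborFinset G v a).mp ha
  set X := (G.neighborFinset a).filter (fun x => ¬ G.Adj v x ∧ x ≠ v) with hX
  by_cases hX2 : 2 ≤ X.card
  · obtain ⟨x1, hx1, x2, hx2, h12⟩ := Finset.one_lt_card.mp hX2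
    rw [hX, Finset.mem_filter] at hx1 hx2
    exact distinguishing_B harc hreg hva ((mem_neighborFinset G a x1).mp hx1.1)
      ((mem_neighborFinset G a x2).mp hx2.1) hx1.2.1 hx2.2.1 hx1.2.2 hx2.2.2 h12
  · exfalso
    have hpart : ∀ x, x ∈ G.neighborFinset a ↔
        (x = v ∨ x ∈ (G.neighborFinset v ∩ G.neighborFinset a) ∨ x ∈ X) := by
      intro x
      simp only [hX, Finset.mem_filter, Finset.mem_inter, mem_neighborFinset]
      constructor
      · intro hax
        by_cases hxv : x = v
        · exact Or.inl hxv
        · by_cases hvx : G.Adj v x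
          · exact Or.inr (Or.inl ⟨hvx, hax⟩)
          · exact Or.inr (Or.inr ⟨hax, hvx, hxv⟩)
      · rintro (rfl | h | h)
        · exact hva.symm
        · exact h.2
        · exact h.1
    have hdisj : v ∉ (G.neighborFinset v ∩ G.neighborFinset a) ∪ X := by
      rw [Finset.mem_union]
      rintro (h | h)
      · exact G.notMem_neighborFinset_self v (Finset.mem_inter.mp h).1
      · rw [hX, Finset.mem_filter] at h
        exact h.2.2 rfl
    have hdisj2 : Disjoint (G.neighborFinset v ∩ G.neighborFinset a) X := by
      rw [Finset.disjoint_left]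
      intro x hx hxX
      rw [hX, Finset.mem_filter] at hxX
      exact hxX.2.1 ((mem_neighborFinset G v x).mp (Finset.mem_inter.mp hx).1)
    have hNaeq : G.neighborFinset a
        = insert v ((G.neighborFinset v ∩ G.neighborFinset a) ∪ X) := by
      ext x
      simp only [Finset.mem_insert, Finset.mem_union]
      exact hpart x
    have hcard : 4 = ((G.neighborFinset v ∩ G.neighborFinset a).card + X.card) + 1 := by
      have h4 : (G.neighborFinset a).card = 4 := hreg a
      have hci := Finset.card_insert_of_notMem hdisj
      rw [Finset.card_union_of_disjoint hdisj2] at hci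
      rw [← hNaeq, h4] at hci
      omega
    push_neg at hX2
    have hsplit : (G.neighborFinset v ∩ G.neighborFinset a).card = 2 ∨
        (G.neighborFinset v ∩ G.neighborFinset a).card = 3 := by omega
    rcases hsplit with h | h
    · exact lam2_false harc hreg hva h
    · exact lam3_false harc hreg hva h

end AR

theorem arcRegular_distinguishingNumber {V : Type*} [Fintype V] (G : SimpleGraph V) [DecidableRel G.Adj]
    (hconn : G.Connected) (hreg : G.IsRegularOfDegree 4)
    (harc : IsArcRegular G) :
    distinguishingNumber G = 2 := by
  classical
  obtain ⟨v⟩ := hconn.nonempty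
  obtain ⟨a, ha⟩ : (G.neighborFinset v).Nonempty := by
    rw [← Finset.card_pos]
    have h4 : (G.neighborFinset v).card = 4 := hreg v
    rw [h4]; norm_num
  have hva : G.Adj v a := (mem_neighborFinset G v a).mp ha
  obtain ⟨c2, hc2⟩ := AR.exists_col harc hreg v
  have h2mem : 2 ∈ {k | ∃ c : V → Fin k, IsDistinguishing G c} := ⟨c2, hc2⟩
  unfold distinguishingNumber
  refine le_antisymm (Nat.sInf_le h2mem) (le_csInf ⟨2, h2mem⟩ ?_)
  rintro k ⟨c, hc⟩
  by_contra hlt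
  push_neg at hlt
  interval_cases k
  · exact (c v).elim0
  · obtain ⟨γ, ⟨hγ1, -⟩, -⟩ := harc v a a v hva hva.symm
    have := hc γ (fun z => Subsingleton.elim _ _) v
    rw [hγ1] at this
    exact hva.ne' this
end
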